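/- arXiv:gr-qc/0310076 — 10 statements merged into one kernel-verified Lean document; each statement's English description precedes it below -/
import Mathlib

section
/- For any nonzero vector k ∈ ℝ⁴, the set W of antisymmetric maps F : Fin 4 → Fin 4 → ℝ (i.e. F a b = -F b a) satisfying Σ_b F a b * k b = 0 for every a is a linear subspace of dimension 3 of the space of antisymmetric 4×4 real arrays. -/
/-!
Over a field of characteristic `≠ 2`, an antisymmetric `n × n` array is determined by its entries
above the diagonal, so these arrays form a space of dimension `n.choose 2`. Contraction with
`k ≠ 0` maps this space onto the hyperplane `k ⬝ᵥ v = 0`: the image lies there because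
`k ⬝ᵥ (F *ᵥ k) = 0` for antisymmetric `F`, and conversely `v` is the contraction of
`v ⊗ w - w ⊗ v` for any `w` with `w ⬝ᵥ k = 1`. The kernel therefore has dimension
`n.choose 2 - (n - 1) = (n - 1).choose 2`, which is `3` for `n = 4`.
-/

open Matrix Module

variable {K ι : Type*} [Field K]

variable (K ι) in
def bivectors : Submodule K (ι → ι → K) where
  carrier := {F | ∀ a b, F a b = -F b a}
  add_mem' hF hG a b := by simp only [Pi.add_apply, hF a b, hG a b, neg_add]
  zero_mem' _ _ := neg_zero.symm
  smul_mem' c F hF a b := by simp only [Pi.smul_apply, smul_eq_mul, hF a b, mul_neg]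

theorem transpose_eq_neg_of_mem_bivectors {F : Matrix ι ι K} (hF : F ∈ bivectors K ι) : Fᵀ = -F :=
  Matrix.ext fun a b => hF b a

theorem apply_self_eq_zero_of_mem_bivectors (hK : ringChar K ≠ 2) {F : ι → ι → K}
    (hF : F ∈ bivectors K ι) (a : ι) : F a a = 0 :=
  (Ring.eq_self_iff_eq_zero_of_char_ne_two hK).1 (hF a a).symm

variable [Fintype ι]

theorem dotProduct_mulVec_self_eq_zero_of_mem_bivectors (hK : ringChar K ≠ 2)
    {F : Matrix ι ι K} (hF : F ∈ bivectors K ι) (v : ι → K) : v ⬝ᵥ (F *ᵥ v) = 0 := by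
  refine (Ring.eq_self_iff_eq_zero_of_char_ne_two hK).1 ?_
  calc -(v ⬝ᵥ (F *ᵥ v)) = -F *ᵥ v ⬝ᵥ v := by
        rw [neg_mulVec, neg_dotProduct, dotProduct_comm]
    _ = v ⬝ᵥ (F *ᵥ v) := by
        rw [← transpose_eq_neg_of_mem_bivectors hF, mulVec_transpose, dotProduct_mulVec]

def bivectorsEquivUpper [LinearOrder ι] (hK : ringChar K ≠ 2) :
    bivectors K ι ≃ₗ[K] ({p : ι × ι // p.1 < p.2} → K) where
  toFun F p := F.1 p.1.1 p.1.2
  map_add' _ _ := rfl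
  map_smul' _ _ := rfl
  invFun g :=
    ⟨fun a b => if h : a < b then g ⟨(a, b), h⟩ else if h : b < a then -g ⟨(b, a), h⟩ else 0,
    fun a b => by
      rcases lt_trichotomy a b with h | rfl | h
      · simp [h, h.not_gt]
      · simp
      · simp [h, h.not_gt]⟩
  left_inv F := by
    ext a b
    rcases lt_trichotomy a b with h | rfl | h
    · simp [h]
    · simp [apply_self_eq_zero_of_mem_bivectors hK F.2]
    · simp [h, h.not_gt, ← F.2 a b]
  right_inv g := funext fun p => dif_pos p.2

theorem finrank_bivectors (hK : ringChar K ≠ 2) :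
    finrank K (bivectors K ι) = (Fintype.card ι).choose 2 := by
  classical
  let : LinearOrder ι := LinearOrder.lift' _ (Fintype.equivFin ι).injective
  rw [(bivectorsEquivUpper hK).finrank_eq, finrank_fintype_fun_eq_card,
    Fintype.card_subtype, Fintype.card_product_filter_lt]

theorem exists_dotProduct_eq_one {k : ι → K} (hk : k ≠ 0) : ∃ w, w ⬝ᵥ k = 1 := by
  classical
  obtain ⟨j, hj⟩ : ∃ j, k j ≠ 0 := Function.ne_iff.1 hk
  exact ⟨(k j)⁻¹ • Pi.single j 1, by simp [smul_dotProduct, single_dotProduct, hj]⟩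

section Contraction

variable (k : ι → K)

def contract : bivectors K ι →ₗ[K] ι → K where
  toFun F := F.1 *ᵥ k
  map_add' F G := add_mulVec F.1 G.1 k
  map_smul' c F := smul_mulVec c F.1 k

def annihilatingBivectors : Submodule K (ι → ι → K) :=
  (LinearMap.ker (contract k)).map (bivectors K ι).subtype

theorem mem_annihilatingBivectors {F : Matrix ι ι K} :
    F ∈ annihilatingBivectors k ↔ F ∈ bivectors K ι ∧ F *ᵥ k = 0 := by
  constructor
  · rintro ⟨G, hG, rfl⟩
    exact ⟨G.2, hG⟩
  · rintro ⟨hF, hFk⟩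
    exact ⟨⟨F, hF⟩, hFk, rfl⟩

theorem range_contract (hK : ringChar K ≠ 2) {w : ι → K} (hw : w ⬝ᵥ k = 1) :
    LinearMap.range (contract k) = LinearMap.ker (dotProductBilin K K k) := by
  ext v
  simp only [LinearMap.mem_range, LinearMap.mem_ker, dotProductBilin_apply_apply]
  constructor
  · rintro ⟨F, rfl⟩
    exact dotProduct_mulVec_self_eq_zero_of_mem_bivectors hK F.2 k
  · intro hv
    refine ⟨⟨vecMulVec v w - vecMulVec w v, fun a b => by simp [vecMulVec_apply]; ring⟩, ?_⟩
    change (vecMulVec v w - vecMulVec w v) *ᵥ k = v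
    simp [sub_mulVec, vecMulVec_mulVec, hw, dotProduct_comm v, hv]

theorem finrank_annihilatingBivectors (hK : ringChar K ≠ 2) (hk : k ≠ 0) :
    finrank K (annihilatingBivectors k) = (Fintype.card ι - 1).choose 2 := by
  obtain ⟨j, -⟩ : ∃ j, k j ≠ 0 := Function.ne_iff.1 hk
  obtain ⟨n, hn⟩ := Nat.exists_eq_add_one.2 (Fintype.card_pos_iff.2 ⟨j⟩)
  have hpascal : (n + 1).choose 2 = n + n.choose 2 := by simpa using Nat.choose_succ_succ' n 1
  obtain ⟨w, hw⟩ := exists_dotProduct_eq_one hk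
  have hdot : dotProductBilin K K k ≠ 0 := fun h => by
    simpa [dotProduct_comm k w, hw] using LinearMap.congr_fun h w
  have hker := Module.Dual.finrank_ker_add_one_of_ne_zero hdot
  have hrank := (contract k).finrank_range_add_finrank_ker
  rw [range_contract k hK hw, finrank_bivectors hK, hn, hpascal] at hrank
  rw [finrank_fintype_fun_eq_card, hn] at hker
  rw [annihilatingBivectors, Submodule.finrank_map_subtype_eq, hn, Nat.add_sub_cancel]
  omega

end Contraction

/-- For any nonzero `k ∈ ℝ⁴`, the set of antisymmetric maps
`F : Fin 4 → Fin 4 → ℝ` with `∑ b, F a b * k b = 0` for every `a`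
is a linear subspace of dimension 3 (a 3-dimensional subspace of the
6-dimensional space of antisymmetric 4×4 real arrays). -/
theorem bivectors_annihilating_vector_dim_three
    (k : Fin 4 → ℝ) (hk : k ≠ 0) :
    ∃ W : Submodule ℝ (Fin 4 → Fin 4 → ℝ),
      (W : Set (Fin 4 → Fin 4 → ℝ)) =
        {F | (∀ a b, F a b = -F b a) ∧ ∀ a, ∑ b : Fin 4, F a b * k b = 0} ∧
      Module.finrank ℝ W = 3 := by
  refine ⟨annihilatingBivectors k, ?_, ?_⟩
  · ext F
    exact (mem_annihilatingBivectors k).trans (and_congr Iff.rfl funext_iff)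
  · rw [finrank_annihilatingBivectors k (by simp [ringChar.eq_zero]) hk]
    rfl
end

section
/- Let k ∈ ℝ⁴ with η(k,k) = ε where ε = 1 or ε = -1, let R₀ ∈ ℝ, write k_a = Σ_b η_{ab} k^b for the lowered covector of k, and define R_{abcd} = (R₀/3)(η_{a[c}η_{d]b} - ε η_{a[c}k_{d]}k_b - ε k_a k_{[c}η_{d]b}). Then for every bivector F satisfying Σ_b F_{ab} k^b = 0 for all a, one has Σ_{c,d} R_{abcd} F^{cd} = (R₀/3) F_{ab} for all a, b. -/
/-- The Minkowski metric `η = diag(-1,1,1,1)` on `ℝ⁴` (its own inverse). -/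
def eta (a b : Fin 4) : ℝ := if a = b then (if a = 0 then -1 else 1) else 0

/-- The lowered covector `v_a = η_{ab} v^b` of a vector `v`. -/
def lower (v : Fin 4 → ℝ) (a : Fin 4) : ℝ := ∑ b : Fin 4, eta a b * v b

/-- The Minkowski inner product of signature `(-,+,+,+)`. -/
def minkowski (v w : Fin 4 → ℝ) : ℝ :=
  -(v 0 * w 0) + v 1 * w 1 + v 2 * w 2 + v 3 * w 3

set_option maxHeartbeats 2000000 in
/-- Equation (14): for the curvature tensor
`R_{abcd} = (R₀/3)(η_{a[c}η_{d]b} - ε η_{a[c}k_{d]}k_b - ε k_a k_{[c}η_{d]b})`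
of a conformally flat space-time with covariantly constant non-null unit vector `k`
(`η(k,k) = ε = ±1`), every bivector `F` with `F_{ab}k^b = 0` satisfies
`R_{abcd}F^{cd} = (R₀/3) F_{ab}`. -/
theorem curvature_acts_as_scalar_on_bivectors_orthogonal_to_k
    (k : Fin 4 → ℝ) (ε : ℝ) (hε : ε = 1 ∨ ε = -1) (hk : minkowski k k = ε)
    (R₀ : ℝ)
    (R : Fin 4 → Fin 4 → Fin 4 → Fin 4 → ℝ)
    (hR : ∀ a b c d, R a b c d =
      (R₀ / 3) * ((eta a c * eta d b - eta a d * eta c b) / 2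
        - ε * ((eta a c * lower k d - eta a d * lower k c) / 2) * lower k b
        - ε * lower k a * ((lower k c * eta d b - lower k d * eta c b) / 2)))
    (F : Fin 4 → Fin 4 → ℝ)
    (hFanti : ∀ a b, F a b = -F b a)
    (hFk : ∀ a, ∑ b : Fin 4, F a b * k b = 0) :
    ∀ a b, (∑ c : Fin 4, ∑ d : Fin 4,
        R a b c d * (∑ e : Fin 4, ∑ f : Fin 4, eta c e * eta d f * F e f))
      = (R₀ / 3) * F a b := by
  have e00 : eta 0 0 = -1 := rfl
  have e01 : eta 0 1 = 0 := rfl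
  have e02 : eta 0 2 = 0 := rfl
  have e03 : eta 0 3 = 0 := rfl
  have e10 : eta 1 0 = 0 := rfl
  have e11 : eta 1 1 = 1 := rfl
  have e12 : eta 1 2 = 0 := rfl
  have e13 : eta 1 3 = 0 := rfl
  have e20 : eta 2 0 = 0 := rfl
  have e21 : eta 2 1 = 0 := rfl
  have e22 : eta 2 2 = 1 := rfl
  have e23 : eta 2 3 = 0 := rfl
  have e30 : eta 3 0 = 0 := rfl
  have e31 : eta 3 1 = 0 := rfl
  have e32 : eta 3 2 = 0 := rfl
  have e33 : eta 3 3 = 1 := rfl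
  have h0 := hFk 0; have h1 := hFk 1; have h2 := hFk 2; have h3 := hFk 3
  simp only [Fin.sum_univ_four] at h0 h1 h2 h3
  have g : ∀ a : Fin 4, (∑ b : Fin 4, F b a * k b) = 0 := by
    intro a
    have h := hFk a
    simp only [Fin.sum_univ_four] at h ⊢
    linear_combination (k 0) * hFanti 0 a + (k 1) * hFanti 1 a + (k 2) * hFanti 2 a + (k 3) * hFanti 3 a - h
  have g0 := g 0; have g1 := g 1; have g2 := g 2; have g3 := g 3
  simp only [Fin.sum_univ_four] at g0 g1 g2 g3
  have hraise : ∀ c d : Fin 4, (∑ e : Fin 4, ∑ f : Fin 4, eta c e * eta d f * F e f) = eta c c * eta d d * F c d := by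
    intro c d; fin_cases c <;> fin_cases d <;> simp only [Fin.mk_zero, Fin.mk_one, Fin.reduceFinMk, Fin.isValue, Fin.sum_univ_four, e00, e01, e02, e03, e10, e11, e12, e13, e20, e21, e22, e23, e30, e31, e32, e33] <;> ring
  have hl0 : lower k 0 = -k 0 := by simp only [lower, Fin.sum_univ_four, e00, e01, e02, e03, e10, e11, e12, e13, e20, e21, e22, e23, e30, e31, e32, e33]; ring
  have hl1 : lower k 1 = k 1 := by simp only [lower, Fin.sum_univ_four, e00, e01, e02, e03, e10, e11, e12, e13, e20, e21, e22, e23, e30, e31, e32, e33]; ring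
  have hl2 : lower k 2 = k 2 := by simp only [lower, Fin.sum_univ_four, e00, e01, e02, e03, e10, e11, e12, e13, e20, e21, e22, e23, e30, e31, e32, e33]; ring
  have hl3 : lower k 3 = k 3 := by simp only [lower, Fin.sum_univ_four, e00, e01, e02, e03, e10, e11, e12, e13, e20, e21, e22, e23, e30, e31, e32, e33]; ring
  intro a b
  simp only [hraise, hR]
  fin_cases a <;> fin_cases b <;> simp only [Fin.mk_zero, Fin.mk_one, Fin.reduceFinMk, Fin.isValue, Fin.sum_univ_four, e00, e01, e02, e03, e10, e11, e12, e13, e20, e21, e22, e23, e30, e31, e32, e33, hl0, hl1, hl2, hl3]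
  · linear_combination (-(R₀/6)) * hFanti 0 0 + (-(R₀*ε/6)) * ((-1 : ℝ) * k 0) * (h0 - g0) + (-(R₀*ε/6)) * ((-1 : ℝ) * k 0) * (g0 - h0)
  · linear_combination (-(R₀/6)) * hFanti 0 1 + (-(R₀*ε/6)) * ((1 : ℝ) * k 1) * (h0 - g0) + (-(R₀*ε/6)) * ((-1 : ℝ) * k 0) * (g1 - h1)
  · linear_combination (-(R₀/6)) * hFanti 0 2 + (-(R₀*ε/6)) * ((1 : ℝ) * k 2) * (h0 - g0) + (-(R₀*ε/6)) * ((-1 : ℝ) * k 0) * (g2 - h2)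
  · linear_combination (-(R₀/6)) * hFanti 0 3 + (-(R₀*ε/6)) * ((1 : ℝ) * k 3) * (h0 - g0) + (-(R₀*ε/6)) * ((-1 : ℝ) * k 0) * (g3 - h3)
  · linear_combination (-(R₀/6)) * hFanti 1 0 + (-(R₀*ε/6)) * ((-1 : ℝ) * k 0) * (h1 - g1) + (-(R₀*ε/6)) * ((1 : ℝ) * k 1) * (g0 - h0)
  · linear_combination (-(R₀/6)) * hFanti 1 1 + (-(R₀*ε/6)) * ((1 : ℝ) * k 1) * (h1 - g1) + (-(R₀*ε/6)) * ((1 : ℝ) * k 1) * (g1 - h1)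
  · linear_combination (-(R₀/6)) * hFanti 1 2 + (-(R₀*ε/6)) * ((1 : ℝ) * k 2) * (h1 - g1) + (-(R₀*ε/6)) * ((1 : ℝ) * k 1) * (g2 - h2)
  · linear_combination (-(R₀/6)) * hFanti 1 3 + (-(R₀*ε/6)) * ((1 : ℝ) * k 3) * (h1 - g1) + (-(R₀*ε/6)) * ((1 : ℝ) * k 1) * (g3 - h3)
  · linear_combination (-(R₀/6)) * hFanti 2 0 + (-(R₀*ε/6)) * ((-1 : ℝ) * k 0) * (h2 - g2) + (-(R₀*ε/6)) * ((1 : ℝ) * k 2) * (g0 - h0)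
  · linear_combination (-(R₀/6)) * hFanti 2 1 + (-(R₀*ε/6)) * ((1 : ℝ) * k 1) * (h2 - g2) + (-(R₀*ε/6)) * ((1 : ℝ) * k 2) * (g1 - h1)
  · linear_combination (-(R₀/6)) * hFanti 2 2 + (-(R₀*ε/6)) * ((1 : ℝ) * k 2) * (h2 - g2) + (-(R₀*ε/6)) * ((1 : ℝ) * k 2) * (g2 - h2)
  · linear_combination (-(R₀/6)) * hFanti 2 3 + (-(R₀*ε/6)) * ((1 : ℝ) * k 3) * (h2 - g2) + (-(R₀*ε/6)) * ((1 : ℝ) * k 2) * (g3 - h3)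
  · linear_combination (-(R₀/6)) * hFanti 3 0 + (-(R₀*ε/6)) * ((-1 : ℝ) * k 0) * (h3 - g3) + (-(R₀*ε/6)) * ((1 : ℝ) * k 3) * (g0 - h0)
  · linear_combination (-(R₀/6)) * hFanti 3 1 + (-(R₀*ε/6)) * ((1 : ℝ) * k 1) * (h3 - g3) + (-(R₀*ε/6)) * ((1 : ℝ) * k 3) * (g1 - h1)
  · linear_combination (-(R₀/6)) * hFanti 3 2 + (-(R₀*ε/6)) * ((1 : ℝ) * k 2) * (h3 - g3) + (-(R₀*ε/6)) * ((1 : ℝ) * k 3) * (g2 - h2)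
  · linear_combination (-(R₀/6)) * hFanti 3 3 + (-(R₀*ε/6)) * ((1 : ℝ) * k 3) * (h3 - g3) + (-(R₀*ε/6)) * ((1 : ℝ) * k 3) * (g3 - h3)
end

section
/- Let k ∈ ℝ⁴ with η(k,k) = ε where ε = 1 or ε = -1, let R₀ ∈ ℝ with R₀ ≠ 0, write k_a for the lowered covector of k, and define R_{abcd} = (R₀/3)(η_{a[c}η_{d]b} - ε η_{a[c}k_{d]}k_b - ε k_a k_{[c}η_{d]b}). Then the linear map on the 6-dimensional space of bivectors given by F ↦ (a, b ↦ Σ_{c,d} R_{abcd} F^{cd}) has kernel equal to the 3-dimensional subspace of simple bivectors of the form k♭ ∧ m = (a, b ↦ k_a m_b - k_b m_a) for covectors m : Fin 4 → ℝ, and hence has rank exactly 3. -/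
/-- The 6-dimensional space of bivectors (antisymmetric 4×4 arrays) on `ℝ⁴`. -/
def Biv : Submodule ℝ (Fin 4 → Fin 4 → ℝ) where
  carrier := {F | ∀ a b, F a b = -F b a}
  add_mem' := by
    intro F G hF hG a b
    simp only [Pi.add_apply]
    rw [hF a b, hG a b]; ring
  zero_mem' := by intro a b; simp
  smul_mem' := by
    intro c F hF a b
    simp only [Pi.smul_apply, smul_eq_mul]
    rw [hF a b]; ring

section Wedge

variable {ι : Type*}

def wedge (u v : ι → ℝ) (a b : ι) : ℝ := u a * v b - u b * v a

lemma wedge_eq_zero_iff {u : ι → ℝ} (hu : u ≠ 0) (v : ι → ℝ) :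
    wedge u v = 0 ↔ ∃ t : ℝ, t • u = v := by
  obtain ⟨a, ha : u a ≠ 0⟩ := Function.ne_iff.mp hu
  constructor
  · intro h
    refine ⟨v a / u a, funext fun b => ?_⟩
    have hab := congrFun₂ h a b
    simp only [wedge, Pi.zero_apply] at hab
    simp only [Pi.smul_apply, smul_eq_mul]
    field_simp
    linear_combination -hab
  · rintro ⟨t, rfl⟩
    funext a b
    simp only [wedge, Pi.smul_apply, smul_eq_mul, Pi.zero_apply]
    ring

variable [Fintype ι]

lemma wedge_apply_dotProduct (u v w : ι → ℝ) (a : ι) :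
    wedge u v a ⬝ᵥ w = (v ⬝ᵥ w) * u a - (u ⬝ᵥ w) * v a := by
  simp only [wedge, dotProduct, sub_mul, Finset.sum_sub_distrib, Finset.sum_mul]
  congr 1 <;> exact Finset.sum_congr rfl fun _ _ => by ring

lemma sum_sum_wedge_mul_of_antisymm {F : ι → ι → ℝ} (hF : ∀ a b, F a b = -F b a)
    (u v : ι → ℝ) :
    ∑ c, ∑ d, wedge u v c d * F c d = 2 * ∑ c, ∑ d, u c * v d * F c d := by
  have hswap : ∑ c, ∑ d, u d * v c * F c d = -∑ c, ∑ d, u c * v d * F c d := by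
    rw [Finset.sum_comm, ← Finset.sum_neg_distrib]
    refine Finset.sum_congr rfl fun c _ => ?_
    rw [← Finset.sum_neg_distrib]
    refine Finset.sum_congr rfl fun d _ => ?_
    rw [hF]; ring
  simp only [wedge, sub_mul, Finset.sum_sub_distrib, hswap]
  ring

end Wedge

lemma eta_comm (a b : Fin 4) : eta a b = eta b a := by
  unfold eta; split_ifs <;> simp_all

lemma eta_mul_self (a : Fin 4) : eta a a * eta a a = 1 := by
  by_cases h : a = 0 <;> simp [eta, h]

lemma sum_eta_mul (a : Fin 4) (g : Fin 4 → ℝ) : ∑ c, eta a c * g c = eta a a * g a :=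
  Finset.sum_eq_single a (fun c _ hc => by simp [eta, Ne.symm hc]) (by simp)

lemma lower_apply (v : Fin 4 → ℝ) (a : Fin 4) : lower v a = eta a a * v a := sum_eta_mul a v

lemma lower_lower (v : Fin 4 → ℝ) : lower (lower v) = v := by
  funext a; rw [lower_apply, lower_apply, ← mul_assoc, eta_mul_self, one_mul]

lemma lower_eta (a : Fin 4) : lower (eta a) = Pi.single a 1 := by
  funext c
  rw [lower_apply, Pi.single_apply]
  by_cases h : c = a
  · simpa [h] using eta_mul_self c
  · simp [eta, h, Ne.symm h]

lemma lower_dotProduct (v w : Fin 4 → ℝ) : lower v ⬝ᵥ w = minkowski v w := by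
  simp [dotProduct, lower_apply, Fin.sum_univ_four, minkowski, eta]

def raise (F : Fin 4 → Fin 4 → ℝ) (c d : Fin 4) : ℝ :=
  ∑ e, ∑ f, eta c e * eta d f * F e f

lemma raise_apply (F : Fin 4 → Fin 4 → ℝ) (c d : Fin 4) :
    raise F c d = eta c c * eta d d * F c d := by
  simp only [raise, mul_assoc, ← Finset.mul_sum, sum_eta_mul]

lemma sum_sum_mul_raise (u v : Fin 4 → ℝ) (F : Fin 4 → Fin 4 → ℝ) :
    ∑ c, ∑ d, u c * v d * raise F c d = lower u ⬝ᵥ fun e => F e ⬝ᵥ lower v := by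
  simp only [raise_apply, lower_apply, dotProduct, Finset.mul_sum]
  exact Finset.sum_congr rfl fun _ _ => Finset.sum_congr rfl fun _ _ => by ring

def wedgeBiv (u : Fin 4 → ℝ) : (Fin 4 → ℝ) →ₗ[ℝ] Biv where
  toFun v := ⟨wedge u v, fun a b => by simp only [wedge]; ring⟩
  map_add' v w := by ext a b; simp only [wedge, Submodule.coe_add, Pi.add_apply]; ring
  map_smul' t v := by
    ext a b; simp only [wedge, SetLike.val_smul, Pi.smul_apply, smul_eq_mul, RingHom.id_apply]; ring

@[simp]
lemma coe_wedgeBiv (u v : Fin 4 → ℝ) : (wedgeBiv u v : Fin 4 → Fin 4 → ℝ) = wedge u v :=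
  rfl

lemma ker_wedgeBiv {u : Fin 4 → ℝ} (hu : u ≠ 0) :
    LinearMap.ker (wedgeBiv u) = Submodule.span ℝ {u} := by
  ext v
  rw [LinearMap.mem_ker, Submodule.mem_span_singleton, ← wedge_eq_zero_iff hu,
    ← Subtype.coe_inj, coe_wedgeBiv]
  rfl

lemma finrank_range_wedgeBiv {u : Fin 4 → ℝ} (hu : u ≠ 0) :
    Module.finrank ℝ (LinearMap.range (wedgeBiv u)) = 3 := by
  have h := LinearMap.finrank_range_add_finrank_ker (wedgeBiv u)
  rw [ker_wedgeBiv hu, finrank_span_singleton hu, Module.finrank_fin_fun] at h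
  omega

def bivEquivUpper : Biv ≃ₗ[ℝ] ({p : Fin 4 × Fin 4 // p.1 < p.2} → ℝ) where
  toFun F p := (F : Fin 4 → Fin 4 → ℝ) p.1.1 p.1.2
  invFun g := ⟨fun a b =>
      if h : a < b then g ⟨(a, b), h⟩ else if h' : b < a then -g ⟨(b, a), h'⟩ else 0,
    fun a b => by
      rcases lt_trichotomy a b with h | rfl | h
      · simp [h, lt_asymm h]
      · simp
      · simp [h, lt_asymm h]⟩
  map_add' F G := rfl
  map_smul' t F := rfl
  left_inv F := by
    obtain ⟨F, hF⟩ := F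
    ext a b
    rcases lt_trichotomy a b with h | rfl | h
    · simp [h]
    · simp only [lt_irrefl, dite_false]
      linarith [hF a a]
    · simp [h, lt_asymm h, hF b a]
  right_inv g := by
    funext p
    simp [p.2]

lemma finrank_biv : Module.finrank ℝ Biv = 6 := by
  rw [bivEquivUpper.finrank_eq, Module.finrank_fintype_fun_eq_card]
  rfl

def curvatureOperator (R : Fin 4 → Fin 4 → Fin 4 → Fin 4 → ℝ) :
    Biv →ₗ[ℝ] (Fin 4 → Fin 4 → ℝ) where
  toFun F a b := ∑ c, ∑ d, R a b c d * raise F c d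
  map_add' F G := by
    ext a b
    simp only [raise_apply, Submodule.coe_add, Pi.add_apply, mul_add, Finset.sum_add_distrib]
  map_smul' t F := by
    ext a b
    simp only [raise_apply, SetLike.val_smul, Pi.smul_apply, smul_eq_mul, RingHom.id_apply,
      Finset.mul_sum]
    exact Finset.sum_congr rfl fun _ _ => Finset.sum_congr rfl fun _ _ => by ring

-- `wedge u v c d / 2` is the antisymmetrization `u_{[c} v_{d]}`.
noncomputable def conformallyFlatCurvature (k : Fin 4 → ℝ) (ε R₀ : ℝ) (a b c d : Fin 4) :
    ℝ :=
  R₀ / 3 * (wedge (eta a) (eta · b) c d / 2 - ε * (wedge (eta a) (lower k) c d / 2) * lower k b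
    - ε * lower k a * (wedge (lower k) (eta · b) c d / 2))

lemma sum_sum_wedge_mul_raise {F : Fin 4 → Fin 4 → ℝ} (hF : ∀ a b, F a b = -F b a)
    (u v : Fin 4 → ℝ) :
    ∑ c, ∑ d, wedge u v c d / 2 * raise F c d = lower u ⬝ᵥ fun e => F e ⬝ᵥ lower v := by
  have hraised := sum_sum_wedge_mul_of_antisymm
    (fun c d => by simp only [raise_apply, hF c d]; ring : ∀ c d, raise F c d = -raise F d c) u v
  rw [← sum_sum_mul_raise]
  simp only [div_mul_eq_mul_div, ← Finset.sum_div, hraised]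
  ring

lemma curvatureOperator_conformallyFlatCurvature_apply (k : Fin 4 → ℝ) (ε R₀ : ℝ) (F : Biv)
    (a b : Fin 4) :
    curvatureOperator (conformallyFlatCurvature k ε R₀) F a b =
      R₀ / 3 * ((F : Fin 4 → Fin 4 → ℝ) a b
        + ε * wedge (lower k) (fun c => (F : Fin 4 → Fin 4 → ℝ) c ⬝ᵥ k) a b) := by
  obtain ⟨F, hF⟩ := F
  have hsplit : ∀ c d, conformallyFlatCurvature k ε R₀ a b c d * raise F c d = R₀ / 3 *
      (wedge (eta a) (eta · b) c d / 2 * raise F c d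
        - ε * lower k b * (wedge (eta a) (lower k) c d / 2 * raise F c d)
        - ε * lower k a * (wedge (lower k) (eta · b) c d / 2 * raise F c d)) := by
    intro c d; unfold conformallyFlatCurvature; ring
  have hlower : lower (eta · b) = Pi.single b 1 := by simp only [eta_comm _ b, lower_eta]
  simp only [curvatureOperator, LinearMap.coe_mk, AddHom.coe_mk, hsplit, ← Finset.mul_sum,
    Finset.sum_sub_distrib, sum_sum_wedge_mul_raise hF, lower_eta, hlower, lower_lower]
  have hcol : (fun e => F e b) = -F b := funext fun e => hF e b
  simp only [single_one_dotProduct, dotProduct_single_one]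
  rw [hcol, dotProduct_neg, dotProduct_comm k, wedge]
  ring

lemma ker_curvatureOperator_conformallyFlatCurvature {k : Fin 4 → ℝ} {ε R₀ : ℝ}
    (hε : ε * ε = 1) (hk : lower k ⬝ᵥ k = ε) (hR₀ : R₀ ≠ 0) :
    LinearMap.ker (curvatureOperator (conformallyFlatCurvature k ε R₀)) =
      LinearMap.range (wedgeBiv (lower k)) := by
  ext F
  rw [LinearMap.mem_ker, LinearMap.mem_range]
  constructor
  · intro hzero
    refine ⟨-ε • fun b => (F : Fin 4 → Fin 4 → ℝ) b ⬝ᵥ k,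
      Subtype.ext (funext₂ fun a b => ?_)⟩
    have h := congrFun₂ hzero a b
    rw [curvatureOperator_conformallyFlatCurvature_apply, Pi.zero_apply, Pi.zero_apply,
      mul_eq_zero, or_iff_right (div_ne_zero hR₀ three_ne_zero)] at h
    simp only [coe_wedgeBiv, wedge, Pi.smul_apply, smul_eq_mul] at h ⊢
    linear_combination -h
  · rintro ⟨m, rfl⟩
    funext a b
    rw [curvatureOperator_conformallyFlatCurvature_apply]
    simp only [coe_wedgeBiv, wedge_apply_dotProduct, hk, Pi.zero_apply]
    simp only [wedge]
    linear_combination (R₀ / 3 * (lower k b * m a - lower k a * m b)) * hε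

/-- For the curvature tensor
`R_{abcd} = (R₀/3)(η_{a[c}η_{d]b} - ε η_{a[c}k_{d]}k_b - ε k_a k_{[c}η_{d]b})`
with `R₀ ≠ 0` and `η(k,k) = ε = ±1`, the induced linear map on the 6-dimensional
bivector space, `F ↦ (a, b ↦ Σ_{c,d} R_{abcd} F^{cd})`, has kernel exactly the
3-dimensional subspace of simple bivectors `k♭ ∧ m`, and hence rank exactly 3. -/
theorem conformally_flat_curvature_rank_three
    (k : Fin 4 → ℝ) (ε : ℝ) (hε : ε = 1 ∨ ε = -1) (hk : minkowski k k = ε)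
    (R₀ : ℝ) (hR₀ : R₀ ≠ 0)
    (R : Fin 4 → Fin 4 → Fin 4 → Fin 4 → ℝ)
    (hR : ∀ a b c d, R a b c d =
      (R₀ / 3) * ((eta a c * eta d b - eta a d * eta c b) / 2
        - ε * ((eta a c * lower k d - eta a d * lower k c) / 2) * lower k b
        - ε * lower k a * ((lower k c * eta d b - lower k d * eta c b) / 2))) :
    ∃ L : Biv →ₗ[ℝ] (Fin 4 → Fin 4 → ℝ),
      (∀ F : Biv, ∀ a b : Fin 4, L F a b =
        ∑ c : Fin 4, ∑ d : Fin 4,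
          R a b c d * (∑ e : Fin 4, ∑ f : Fin 4,
            eta c e * eta d f * (F : Fin 4 → Fin 4 → ℝ) e f)) ∧
      (∀ F : Biv, F ∈ LinearMap.ker L ↔
        ∃ m : Fin 4 → ℝ, ∀ a b : Fin 4,
          (F : Fin 4 → Fin 4 → ℝ) a b = lower k a * m b - lower k b * m a) ∧
      Module.finrank ℝ (LinearMap.ker L) = 3 ∧
      Module.finrank ℝ (LinearMap.range L) = 3 := by
  obtain rfl : R = conformallyFlatCurvature k ε R₀ := by
    funext a b c d; exact hR a b c d
  have hε2 : ε * ε = 1 := by rcases hε with rfl | rfl <;> norm_num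
  have hkk : lower k ⬝ᵥ k = ε := (lower_dotProduct k k).trans hk
  have hk0 : lower k ≠ 0 := by
    rintro h
    rw [h, zero_dotProduct] at hkk
    simp [← hkk] at hε2
  have hker := ker_curvatureOperator_conformallyFlatCurvature hε2 hkk hR₀
  refine ⟨curvatureOperator _, fun F a b => rfl, fun F => ?_, ?_, ?_⟩
  · rw [hker, LinearMap.mem_range]
    simp only [Subtype.ext_iff, funext_iff]
    exact exists_congr fun m => forall₂_congr fun a b => eq_comm
  · rw [hker, finrank_range_wedgeBiv hk0]
  · have h := LinearMap.finrank_range_add_finrank_ker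
      (curvatureOperator (conformallyFlatCurvature k ε R₀))
    rw [finrank_biv, hker, finrank_range_wedgeBiv hk0] at h
    omega
end

section
/- Let (l,n,x,y) be a real null tetrad on Minkowski ℝ⁴ with lowered covectors λ, ν, ξ, υ, let e ∈ ℝ with e ≠ 0, and for a,b,c ∈ ℝ set F = a·(λ∧ξ) + b·(λ∧υ) + c·(λ∧ν + e·(ξ∧υ)). Then F is a simple bivector (i.e. F = p∧q for some covectors p,q) if and only if c = 0; and when c = 0, F = λ∧(a·ξ + b·υ), a null bivector with principal null direction l. -/
lemma lower_dot (u v : Fin 4 → ℝ) : ∑ i : Fin 4, lower u i * v i = minkowski u v := by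
  simp [lower, eta, minkowski, Fin.sum_univ_four]

lemma mink_symm (u v : Fin 4 → ℝ) : minkowski u v = minkowski v u := by
  simp [minkowski]; ring

/-- For a real null tetrad `(l,n,x,y)` with lowered covectors `λ,ν,ξ,υ` and `e ≠ 0`,
the bivector `F = a (λ∧ξ) + b (λ∧υ) + c (λ∧ν + e ξ∧υ)` is simple if and only if
`c = 0`; and when `c = 0`, `F = λ ∧ (a ξ + b υ)`, a null bivector with principal
null direction `l`. (The only simple members of the `R₁₂` algebra are null.) -/
theorem simple_members_of_R12_algebra
    (l n x y : Fin 4 → ℝ)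
    (hll : minkowski l l = 0) (hnn : minkowski n n = 0)
    (hxx : minkowski x x = 1) (hyy : minkowski y y = 1)
    (hln : minkowski l n = 1) (hlx : minkowski l x = 0) (hly : minkowski l y = 0)
    (hnx : minkowski n x = 0) (hny : minkowski n y = 0) (hxy : minkowski x y = 0)
    (a b c e : ℝ) (he : e ≠ 0)
    (F : Fin 4 → Fin 4 → ℝ)
    (hF : ∀ i j, F i j =
      a * (lower l i * lower x j - lower l j * lower x i)
      + b * (lower l i * lower y j - lower l j * lower y i)
      + c * ((lower l i * lower n j - lower l j * lower n i)
          + e * (lower x i * lower y j - lower x j * lower y i))) :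
    ((∃ p q : Fin 4 → ℝ, ∀ i j, F i j = p i * q j - p j * q i) ↔ c = 0) ∧
      (c = 0 → ∀ i j, F i j =
        lower l i * (a * lower x j + b * lower y j)
          - lower l j * (a * lower x i + b * lower y i)) := by
  -- contraction of F with two vectors
  have hB : ∀ v w : Fin 4 → ℝ, ∑ i : Fin 4, ∑ j : Fin 4, v i * F i j * w j =
      a * (minkowski l v * minkowski x w - minkowski l w * minkowski x v)
      + b * (minkowski l v * minkowski y w - minkowski l w * minkowski y v)
      + c * ((minkowski l v * minkowski n w - minkowski l w * minkowski n v)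
          + e * (minkowski x v * minkowski y w - minkowski x w * minkowski y v)) := by
    intro v w
    simp only [hF, ← lower_dot, Fin.sum_univ_four]
    ring
  constructor
  · constructor
    · rintro ⟨p, q, hpq⟩
      -- contraction of a simple bivector
      have hS : ∀ v w : Fin 4 → ℝ, ∑ i : Fin 4, ∑ j : Fin 4, v i * F i j * w j =
          (∑ i : Fin 4, p i * v i) * (∑ i : Fin 4, q i * w i)
          - (∑ i : Fin 4, p i * w i) * (∑ i : Fin 4, q i * v i) := by
        intro v w
        simp only [hpq, Fin.sum_univ_four]
        ring
      -- Plücker relation for a simple bivector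
      have key : (∑ i : Fin 4, ∑ j : Fin 4, n i * F i j * l j)
            * (∑ i : Fin 4, ∑ j : Fin 4, x i * F i j * y j)
          - (∑ i : Fin 4, ∑ j : Fin 4, n i * F i j * x j)
            * (∑ i : Fin 4, ∑ j : Fin 4, l i * F i j * y j)
          + (∑ i : Fin 4, ∑ j : Fin 4, n i * F i j * y j)
            * (∑ i : Fin 4, ∑ j : Fin 4, l i * F i j * x j) = 0 := by
        simp only [hS]; ring
      rw [hB n l, hB x y, hB n x, hB l y, hB n y, hB l x] at key
      rw [mink_symm l n, mink_symm x n, mink_symm y n, mink_symm n l, mink_symm x l,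
        mink_symm y l] at key
      rw [hll, hnn, hxx, hyy, hln, hlx, hly, hnx, hny, hxy] at key
      have : c ^ 2 * e = 0 := by nlinarith [key]
      have hc2 : c ^ 2 = 0 := by
        rcases mul_eq_zero.1 this with h | h
        · exact h
        · exact absurd h he
      exact pow_eq_zero_iff (n := 2) (by norm_num) |>.1 hc2
    · intro hc
      refine ⟨lower l, fun j => a * lower x j + b * lower y j, fun i j => ?_⟩
      rw [hF i j, hc]; ring
  · intro hc i j
    rw [hF i j, hc]; ring
end

section
/- Let (l,n,x,y) be a real null tetrad on Minkowski ℝ⁴ with lowered covectors λ, ν, ξ, υ, let c ∈ ℝ with c ≠ 0, and define Ric_{ab} = -c(λ_a ν_b + ν_a λ_b - ξ_a ξ_b - υ_a υ_b). If k ∈ ℝ⁴ is a nonzero null vector satisfying Σ_b Ric_{ab} k^b = δ k_a for some δ ∈ ℝ (where k_a is the lowered covector of k), then k is proportional to l or k is proportional to n. -/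
/-!
Since the tetrad is a basis, every vector satisfies the completeness relation
`k = η(n,k) l + η(l,k) n + η(x,k) x + η(y,k) y`, and the Ricci eigenvalue equation becomes
`δ k = -c (η(n,k) l + η(l,k) n) + c (η(x,k) x + η(y,k) y)`: the Ricci operator is `-c` on the
plane spanned by `l, n` and `+c` on the plane spanned by `x, y`. These eigenvalues differ as
`c ≠ 0`, so `k` lies in one of the two planes. The spacelike plane contains no nonzero null
vector, and a null vector `α l + β n` has `2αβ = 0`.
-/

lemma minkowski_comm (v w : Fin 4 → ℝ) : minkowski v w = minkowski w v := by
  unfold minkowski; ring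

lemma minkowski_combination (u l n x y : Fin 4 → ℝ) (a b c d : ℝ) :
    minkowski u (a • l + b • n + c • x + d • y) =
      a * minkowski u l + b * minkowski u n + c * minkowski u x + d * minkowski u y := by
  simp only [minkowski, Pi.add_apply, Pi.smul_apply, smul_eq_mul]; ring

lemma sum_lower_mul (v w : Fin 4 → ℝ) : ∑ b, lower v b * w b = minkowski v w := by
  simp [lower, eta, Fin.sum_univ_four, minkowski]

lemma lower_injective : Function.Injective lower := by
  intro v w h
  funext a
  have ha := congrFun h a
  fin_cases a <;> simp [lower, eta] at ha ⊢ <;> linarith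

lemma lower_smul (t : ℝ) (v : Fin 4 → ℝ) : lower (t • v) = t • lower v := by
  funext a
  simp [lower, Finset.mul_sum, mul_left_comm]

lemma sum_mul_eq_lower_of_ricci {l n x y : Fin 4 → ℝ} {c : ℝ} {Ric : Fin 4 → Fin 4 → ℝ}
    (hRic : ∀ a b, Ric a b =
      -c * (lower l a * lower n b + lower n a * lower l b
        - lower x a * lower x b - lower y a * lower y b))
    (k : Fin 4 → ℝ) (a : Fin 4) :
    ∑ b, Ric a b * k b = lower ((-c * minkowski n k) • l + (-c * minkowski l k) • n
      + (c * minkowski x k) • x + (c * minkowski y k) • y) a := by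
  simp only [hRic, ← sum_lower_mul]
  fin_cases a <;> simp [lower, eta, Fin.sum_univ_four] <;> ring

lemma smul_eq_of_ricci_eigen {l n x y k : Fin 4 → ℝ} {c δ : ℝ} {Ric : Fin 4 → Fin 4 → ℝ}
    (hRic : ∀ a b, Ric a b =
      -c * (lower l a * lower n b + lower n a * lower l b
        - lower x a * lower x b - lower y a * lower y b))
    (heig : ∀ a, ∑ b : Fin 4, Ric a b * k b = δ * lower k a) :
    δ • k = (-c * minkowski n k) • l + (-c * minkowski l k) • n
      + (c * minkowski x k) • x + (c * minkowski y k) • y :=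
  lower_injective <| funext fun a => by
    rw [lower_smul, Pi.smul_apply, smul_eq_mul, ← heig, sum_mul_eq_lower_of_ricci hRic]

structure IsRealNullTetrad (l n x y : Fin 4 → ℝ) : Prop where
  ll : minkowski l l = 0
  nn : minkowski n n = 0
  xx : minkowski x x = 1
  yy : minkowski y y = 1
  ln : minkowski l n = 1
  lx : minkowski l x = 0
  ly : minkowski l y = 0
  nx : minkowski n x = 0
  ny : minkowski n y = 0
  xy : minkowski x y = 0

namespace IsRealNullTetrad

variable {l n x y : Fin 4 → ℝ}

lemma minkowski_of_eq_combination (h : IsRealNullTetrad l n x y) {v : Fin 4 → ℝ} {a b c d : ℝ}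
    (hv : v = a • l + b • n + c • x + d • y) :
    minkowski n v = a ∧ minkowski l v = b ∧ minkowski x v = c ∧ minkowski y v = d := by
  subst hv
  simp only [minkowski_combination, minkowski_comm n l, minkowski_comm x l, minkowski_comm x n,
    minkowski_comm y l, minkowski_comm y n, minkowski_comm y x,
    h.ll, h.nn, h.xx, h.yy, h.ln, h.lx, h.ly, h.nx, h.ny, h.xy]
  refine ⟨?_, ?_, ?_, ?_⟩ <;> ring

lemma coeffs_eq_of_combination_eq (h : IsRealNullTetrad l n x y) {a b c d a' b' c' d' : ℝ}
    (he : a • l + b • n + c • x + d • y = a' • l + b' • n + c' • x + d' • y) :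
    a = a' ∧ b = b' ∧ c = c' ∧ d = d' := by
  obtain ⟨ha, hb, hc, hd⟩ := h.minkowski_of_eq_combination he
  obtain ⟨ha', hb', hc', hd'⟩ :=
    h.minkowski_of_eq_combination (a := a) (b := b) (c := c) (d := d) rfl
  exact ⟨ha'.symm.trans ha, hb'.symm.trans hb, hc'.symm.trans hc, hd'.symm.trans hd⟩

lemma linearIndependent (h : IsRealNullTetrad l n x y) : LinearIndependent ℝ ![l, n, x, y] := by
  refine Fintype.linearIndependent_iff.mpr fun g hg => ?_
  have h0 := h.coeffs_eq_of_combination_eq (a' := 0) (b' := 0) (c' := 0) (d' := 0)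
    (by simpa [Fin.sum_univ_four] using hg)
  intro i
  fin_cases i <;> simp [h0]

lemma eq_combination (h : IsRealNullTetrad l n x y) (w : Fin 4 → ℝ) :
    w = minkowski n w • l + minkowski l w • n + minkowski x w • x + minkowski y w • y := by
  have hspan := h.linearIndependent.span_eq_top_of_card_eq_finrank' (by simp)
  obtain ⟨g, rfl⟩ :=
    (Submodule.mem_span_range_iff_exists_fun ℝ).mp (hspan ▸ Submodule.mem_top (x := w))
  simp only [Fin.sum_univ_four, Matrix.cons_val]
  obtain ⟨ha, hb, hc, hd⟩ := h.minkowski_of_eq_combination (v := _) rfl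
  rw [ha, hb, hc, hd]

lemma minkowski_self_of_eq_combination (h : IsRealNullTetrad l n x y) {v : Fin 4 → ℝ}
    {a b c d : ℝ} (hv : v = a • l + b • n + c • x + d • y) :
    minkowski v v = 2 * a * b + c ^ 2 + d ^ 2 := by
  obtain ⟨ha, hb, hc, hd⟩ := h.minkowski_of_eq_combination hv
  conv_lhs => arg 2; rw [hv]
  rw [minkowski_combination, minkowski_comm _ l, minkowski_comm _ n, minkowski_comm _ x,
    minkowski_comm _ y, ha, hb, hc, hd]
  ring

end IsRealNullTetrad

lemma eigen_coeffs_eq_zero {c δ α β γ ε : ℝ} (hc : c ≠ 0)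
    (hα : δ * α = -c * α) (hβ : δ * β = -c * β) (hγ : δ * γ = c * γ) (hε : δ * ε = c * ε)
    (hnull : 2 * α * β + γ ^ 2 + ε ^ 2 = 0) :
    γ = 0 ∧ ε = 0 ∧ (α = 0 ∨ β = 0) := by
  by_cases hδ : δ = -c
  · subst hδ
    have hγ0 : γ = 0 := by
      have : (2 * c) * γ = 0 := by linarith
      simpa [hc] using this
    have hε0 : ε = 0 := by
      have : (2 * c) * ε = 0 := by linarith
      simpa [hc] using this
    subst hγ0 hε0
    refine ⟨rfl, rfl, ?_⟩
    have : 2 * (α * β) = 0 := by linarith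
    simpa using this
  · have hδc : δ + c ≠ 0 := fun h => hδ (by linarith)
    have hα0 : α = 0 := by
      have : (δ + c) * α = 0 := by linarith
      simpa [hδc] using this
    have hβ0 : β = 0 := by
      have : (δ + c) * β = 0 := by linarith
      simpa [hδc] using this
    subst hα0 hβ0
    have hγ0 : γ = 0 := by nlinarith [sq_nonneg γ, sq_nonneg ε]
    have hε0 : ε = 0 := by nlinarith [sq_nonneg γ, sq_nonneg ε]
    exact ⟨hγ0, hε0, Or.inl rfl⟩

theorem null_eigenvectors_of_nonnull_EM_Ricci_general
    (l n x y : Fin 4 → ℝ)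
    (hll : minkowski l l = 0) (hnn : minkowski n n = 0)
    (hxx : minkowski x x = 1) (hyy : minkowski y y = 1)
    (hln : minkowski l n = 1) (hlx : minkowski l x = 0) (hly : minkowski l y = 0)
    (hnx : minkowski n x = 0) (hny : minkowski n y = 0) (hxy : minkowski x y = 0)
    (c : ℝ) (hc : c ≠ 0)
    (Ric : Fin 4 → Fin 4 → ℝ)
    (hRic : ∀ a b, Ric a b =
      -c * (lower l a * lower n b + lower n a * lower l b
        - lower x a * lower x b - lower y a * lower y b))
    (k : Fin 4 → ℝ) (hknull : minkowski k k = 0)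
    (δ : ℝ) (heig : ∀ a, ∑ b : Fin 4, Ric a b * k b = δ * lower k a) :
    (∃ t : ℝ, k = t • l) ∨ (∃ t : ℝ, k = t • n) := by
  have ht : IsRealNullTetrad l n x y := ⟨hll, hnn, hxx, hyy, hln, hlx, hly, hnx, hny, hxy⟩
  have hk := ht.eq_combination k
  set α := minkowski n k
  set β := minkowski l k
  set γ := minkowski x k
  set ε := minkowski y k
  have hδk : (δ * α) • l + (δ * β) • n + (δ * γ) • x + (δ * ε) • y =
      (-c * α) • l + (-c * β) • n + (c * γ) • x + (c * ε) • y := by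
    rw [← smul_eq_of_ricci_eigen hRic heig, hk]
    simp only [smul_add, smul_smul]
  obtain ⟨hα, hβ, hγ, hε⟩ := ht.coeffs_eq_of_combination_eq hδk
  rw [ht.minkowski_self_of_eq_combination hk] at hknull
  obtain ⟨hγ0, hε0, hα0 | hβ0⟩ := eigen_coeffs_eq_zero hc hα hβ hγ hε hknull
  · exact Or.inr ⟨β, by simp [hk, hα0, hγ0, hε0]⟩
  · exact Or.inl ⟨α, by simp [hk, hβ0, hγ0, hε0]⟩

/-- For the non-null Einstein–Maxwell Ricci tensor
`Ric_{ab} = -c(λ_a ν_b + ν_a λ_b - ξ_a ξ_b - υ_a υ_b)` built from a real null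
tetrad `(l,n,x,y)` with `c ≠ 0`, the only null Ricci eigendirections are those
spanned by `l` and `n`. -/
theorem null_eigenvectors_of_nonnull_EM_Ricci
    (l n x y : Fin 4 → ℝ)
    (hll : minkowski l l = 0) (hnn : minkowski n n = 0)
    (hxx : minkowski x x = 1) (hyy : minkowski y y = 1)
    (hln : minkowski l n = 1) (hlx : minkowski l x = 0) (hly : minkowski l y = 0)
    (hnx : minkowski n x = 0) (hny : minkowski n y = 0) (hxy : minkowski x y = 0)
    (c : ℝ) (hc : c ≠ 0)
    (Ric : Fin 4 → Fin 4 → ℝ)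
    (hRic : ∀ a b, Ric a b =
      -c * (lower l a * lower n b + lower n a * lower l b
        - lower x a * lower x b - lower y a * lower y b))
    (k : Fin 4 → ℝ) (hk0 : k ≠ 0) (hknull : minkowski k k = 0)
    (δ : ℝ) (heig : ∀ a, ∑ b : Fin 4, Ric a b * k b = δ * lower k a) :
    (∃ t : ℝ, k = t • l) ∨ (∃ t : ℝ, k = t • n) :=
  null_eigenvectors_of_nonnull_EM_Ricci_general l n x y hll hnn hxx hyy hln hlx hly hnx hny hxy c hc
    Ric hRic k hknull δ heig
end

section
/- Let u, k ∈ ℝ⁴ with η(u,u) = -1, η(k,k) = 0 and k ≠ 0, with lowered covectors u_a and k_a. Let κ₀, μ, p, δ ∈ ℝ with κ₀ ≠ 0, and suppose that δ k_a = (κ₀/2)(μ - p) k_a + κ₀ (μ + p) η(k,u) u_a for all a. Then μ + p = 0. -/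
lemma lower_eval (v : Fin 4 → ℝ) :
    lower v 0 = -v 0 ∧ lower v 1 = v 1 ∧ lower v 2 = v 2 ∧ lower v 3 = v 3 := by
  refine ⟨?_, ?_, ?_, ?_⟩ <;> simp [lower, eta, Fin.sum_univ_four]

/-- A nonzero null vector is never Minkowski-orthogonal to a unit timelike vector. -/
lemma mink_ne_zero (u k : Fin 4 → ℝ)
    (hu : minkowski u u = -1) (hk : minkowski k k = 0) (hk0 : k ≠ 0) :
    minkowski k u ≠ 0 := by
  simp only [minkowski] at hu hk ⊢
  intro hm0
  apply hk0
  have hk' : k 1 ^ 2 + k 2 ^ 2 + k 3 ^ 2 = k 0 ^ 2 := by linear_combination hk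
  have hu' : u 1 ^ 2 + u 2 ^ 2 + u 3 ^ 2 = u 0 ^ 2 - 1 := by linear_combination hu
  have hm' : k 1 * u 1 + k 2 * u 2 + k 3 * u 3 = k 0 * u 0 := by linear_combination hm0
  have e : k 0 ^ 2 + ((k 1 * u 2 - k 2 * u 1) ^ 2 + (k 1 * u 3 - k 3 * u 1) ^ 2 +
      (k 2 * u 3 - k 3 * u 2) ^ 2) = 0 := by
    linear_combination (u 1 ^ 2 + u 2 ^ 2 + u 3 ^ 2) * hk' + k 0 ^ 2 * hu' -
      (k 1 * u 1 + k 2 * u 2 + k 3 * u 3 + k 0 * u 0) * hm'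
  have h00 : k 0 = 0 := by
    have hle : k 0 ^ 2 ≤ 0 := by
      nlinarith [sq_nonneg (k 1 * u 2 - k 2 * u 1), sq_nonneg (k 1 * u 3 - k 3 * u 1),
        sq_nonneg (k 2 * u 3 - k 3 * u 2)]
    have heq : k 0 ^ 2 = 0 := le_antisymm hle (sq_nonneg _)
    exact sq_eq_zero_iff.mp heq
  have hs : k 1 ^ 2 + k 2 ^ 2 + k 3 ^ 2 = 0 := by rw [h00] at hk'; simpa using hk'
  have h11 : k 1 = 0 := sq_eq_zero_iff.mp (le_antisymm
    (by linarith [sq_nonneg (k 2), sq_nonneg (k 3)]) (sq_nonneg _))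
  have h22 : k 2 = 0 := sq_eq_zero_iff.mp (le_antisymm
    (by linarith [sq_nonneg (k 1), sq_nonneg (k 3)]) (sq_nonneg _))
  have h33 : k 3 = 0 := sq_eq_zero_iff.mp (le_antisymm
    (by linarith [sq_nonneg (k 1), sq_nonneg (k 2)]) (sq_nonneg _))
  funext a
  fin_cases a <;> simpa using ‹_›

/-- Equation (24): if `u` is unit timelike, `k` is a nonzero null vector and
`δ k_a = (κ₀/2)(μ - p) k_a + κ₀ (μ + p) η(k,u) u_a` with `κ₀ ≠ 0`, then `μ + p = 0`
(the perfect fluid is an Einstein space). -/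
theorem perfect_fluid_null_eigenvector_forces_einstein
    (u k : Fin 4 → ℝ)
    (hu : minkowski u u = -1) (hk : minkowski k k = 0) (hk0 : k ≠ 0)
    (κ₀ μ p δ : ℝ) (hκ₀ : κ₀ ≠ 0)
    (h : ∀ a, δ * lower k a =
      (κ₀ / 2) * (μ - p) * lower k a + κ₀ * (μ + p) * minkowski k u * lower u a) :
    μ + p = 0 := by
  have hm := mink_ne_zero u k hu hk hk0
  obtain ⟨lk0, lk1, lk2, lk3⟩ := lower_eval k
  obtain ⟨lu0, lu1, lu2, lu3⟩ := lower_eval u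
  have h0 := h 0; have h1 := h 1; have h2 := h 2; have h3 := h 3
  rw [lk0, lu0] at h0; rw [lk1, lu1] at h1
  rw [lk2, lu2] at h2; rw [lk3, lu3] at h3
  simp only [minkowski] at hu hk hm h0 h1 h2 h3
  -- contract the eigenvector equation with k
  have key : κ₀ * (μ + p) * (-(k 0 * u 0) + k 1 * u 1 + k 2 * u 2 + k 3 * u 3) *
      (-(k 0 * u 0) + k 1 * u 1 + k 2 * u 2 + k 3 * u 3) = 0 := by
    linear_combination (-(k 0)) * h0 - (k 1) * h1 - (k 2) * h2 - (k 3) * h3 +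
      δ * hk - (κ₀ / 2) * (μ - p) * hk
  rcases mul_eq_zero.mp key with h' | h'
  · rcases mul_eq_zero.mp h' with h'' | h''
    · rcases mul_eq_zero.mp h'' with h''' | h'''
      · exact absurd h''' hκ₀
      · exact h'''
    · exact absurd h'' hm
  · exact absurd h' hm
end

section
/- Let m, ε ∈ ℝ with m ≠ 0 and ε = 1 or ε = -1. Let ψ, ρ : ℝ → ℝ be differentiable functions such that for all u ∈ ℝ: deriv ψ u = ρ u, ε * deriv ρ u = m² * ψ u, and ε * (ρ u)² + (1/2) * m² * (ψ u)² = 0. Then ψ u = 0 for all u ∈ ℝ. -/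
/-! Differentiating the constraint `ε ρ² + ½ m² ψ² = 0` and substituting the field equations
gives `(3/2) m² ψ ρ = 0`, so at every point `ψ = 0` or `ρ = 0`; in the latter case the
constraint itself reduces to `½ m² ψ² = 0`. -/

theorem mul_deriv_add_mul_deriv_eq_zero_of_forall_mul_sq_add_mul_sq_eq
    {f g : ℝ → ℝ} {a b c x : ℝ} (hf : DifferentiableAt ℝ f x) (hg : DifferentiableAt ℝ g x)
    (h : ∀ y, a * f y ^ 2 + b * g y ^ 2 = c) :
    a * f x * deriv f x + b * g x * deriv g x = 0 := by
  have hD := ((hf.hasDerivAt.pow 2).const_mul a).add ((hg.hasDerivAt.pow 2).const_mul b)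
  rw [show ((fun y => a * (f ^ 2) y) + fun y => b * (g ^ 2) y) = fun _ => c from funext h] at hD
  linear_combination hD.unique (hasDerivAt_const x c) / 2

theorem massive_scalar_field_constraint_forces_zero_general
    (m ε : ℝ) (hm : m ≠ 0)
    (ψ ρ : ℝ → ℝ) (hψ : Differentiable ℝ ψ) (hρ : Differentiable ℝ ρ)
    (h1 : ∀ u : ℝ, deriv ψ u = ρ u)
    (h2 : ∀ u : ℝ, ε * deriv ρ u = m ^ 2 * ψ u)
    (h3 : ∀ u : ℝ, ε * (ρ u) ^ 2 + (1 / 2) * m ^ 2 * (ψ u) ^ 2 = 0) :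
    ∀ u : ℝ, ψ u = 0 := by
  intro u
  have hderiv := mul_deriv_add_mul_deriv_eq_zero_of_forall_mul_sq_add_mul_sq_eq (hρ u) (hψ u) h3
  have hψρ : m ^ 2 * (ψ u * ρ u) = 0 := by
    linear_combination (2 / 3) * hderiv - (2 / 3) * ρ u * h2 u - (1 / 3) * m ^ 2 * ψ u * h1 u
  have hm2 : m ^ 2 ≠ 0 := pow_ne_zero 2 hm
  rcases mul_eq_zero.mp ((mul_eq_zero.mp hψρ).resolve_left hm2) with hψu | hρu
  · exact hψu
  · have hsq : m ^ 2 * ψ u ^ 2 = 0 := by linear_combination 2 * h3 u - 2 * ε * ρ u * hρu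
    exact pow_eq_zero_iff two_ne_zero |>.mp ((mul_eq_zero.mp hsq).resolve_left hm2)

/-- The key analytic step for massive scalar fields: if `ψ' = ρ`, `ε ρ' = m² ψ` and
`ε ρ² + ½ m² ψ² = 0` with `m ≠ 0` and `ε = ±1`, then `ψ ≡ 0`. -/
theorem massive_scalar_field_constraint_forces_zero
    (m ε : ℝ) (hm : m ≠ 0) (hε : ε = 1 ∨ ε = -1)
    (ψ ρ : ℝ → ℝ) (hψ : Differentiable ℝ ψ) (hρ : Differentiable ℝ ρ)
    (h1 : ∀ u : ℝ, deriv ψ u = ρ u)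
    (h2 : ∀ u : ℝ, ε * deriv ρ u = m ^ 2 * ψ u)
    (h3 : ∀ u : ℝ, ε * (ρ u) ^ 2 + (1 / 2) * m ^ 2 * (ψ u) ^ 2 = 0) :
    ∀ u : ℝ, ψ u = 0 :=
  massive_scalar_field_constraint_forces_zero_general m ε hm ψ ρ hψ hρ h1 h2 h3
end

section
/- Let S : Fin 4 → Fin 4 → ℝ be symmetric, let R₀ = Σ η^{ab} S_{ab} be its η-trace, let k ∈ ℝ⁴ be a nonzero vector with lowered covector k_a, and define R_{abcd} = S_{a[c}η_{d]b} + η_{a[c}S_{d]b} - (R₀/3) η_{a[c}η_{d]b}. Suppose Σ_d R_{abcd} k^d = 0 for all a,b,c. Then: (i) k_c S_{db} - k_d S_{cb} = (R₀/3)(k_c η_{db} - k_d η_{cb}) for all b,c,d; and (ii) η(k,k) · ((R₀/3) η_{ab} - S_{ab}) = (R₀/3) k_a k_b for all a,b. -/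
set_option maxHeartbeats 2000000


/-- Equation (11): for the conformally flat curvature tensor
`R_{abcd} = S_{a[c}η_{d]b} + η_{a[c}S_{d]b} - (R₀/3) η_{a[c}η_{d]b}` with `S`
symmetric of η-trace `R₀`, a nonzero vector `k` with `R_{abcd}k^d = 0` satisfies
(i) `k_{[c}S_{d]b} = (R₀/3) k_{[c}η_{d]b}` and
(ii) `η(k,k)((R₀/3)η_{ab} - S_{ab}) = (R₀/3) k_a k_b`. -/
theorem conformally_flat_constant_vector_ricci_identities
    (S : Fin 4 → Fin 4 → ℝ) (hS : ∀ a b, S a b = S b a)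
    (R₀ : ℝ) (hR₀ : R₀ = ∑ a : Fin 4, ∑ b : Fin 4, eta a b * S a b)
    (k : Fin 4 → ℝ) (hk0 : k ≠ 0)
    (R : Fin 4 → Fin 4 → Fin 4 → Fin 4 → ℝ)
    (hR : ∀ a b c d, R a b c d =
      (S a c * eta d b - S a d * eta c b) / 2
      + (eta a c * S d b - eta a d * S c b) / 2
      - (R₀ / 3) * ((eta a c * eta d b - eta a d * eta c b) / 2))
    (hRk : ∀ a b c, ∑ d : Fin 4, R a b c d * k d = 0) :
    (∀ b c d, lower k c * S d b - lower k d * S c b =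
      (R₀ / 3) * (lower k c * eta d b - lower k d * eta c b)) ∧
    (∀ a b, minkowski k k * ((R₀ / 3) * eta a b - S a b) =
      (R₀ / 3) * lower k a * lower k b) := by
  have heta : ∀ a b, eta a b = eta b a := by
    intro a b; fin_cases a <;> fin_cases b <;> simp [eta]
  have hR₀' : R₀ = -S 0 0 + S 1 1 + S 2 2 + S 3 3 := by
    rw [hR₀]; simp [Fin.sum_univ_four, eta]; try ring
  have hE : ∀ a b c, S a c * lower k b - (∑ x : Fin 4, S a x * k x) * eta c b
      + eta a c * (∑ x : Fin 4, S x b * k x) - lower k a * S c b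
      = R₀ / 3 * (eta a c * lower k b - lower k a * eta c b) := by
    intro a b c
    have h := hRk a b c
    simp only [hR] at h
    fin_cases a <;> fin_cases b <;> fin_cases c <;>
      simp [Fin.sum_univ_four, lower, eta, -mul_eq_zero] at h ⊢ <;>
      linear_combination 2 * h
  have hQ : ∀ b, (∑ x : Fin 4, S x b * k x) = 0 := by
    intro b
    have e0 := hE 0 b 0
    have e1 := hE 1 b 1
    have e2 := hE 2 b 2
    have e3 := hE 3 b 3
    have htr : R₀ * lower k b = (-S 0 0 + S 1 1 + S 2 2 + S 3 3) * lower k b := by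
      rw [← hR₀']
    have hs0 : S b 0 * k 0 = S 0 b * k 0 := by rw [hS b 0]
    have hs1 : S b 1 * k 1 = S 1 b * k 1 := by rw [hS b 1]
    have hs2 : S b 2 * k 2 = S 2 b * k 2 := by rw [hS b 2]
    have hs3 : S b 3 * k 3 = S 3 b * k 3 := by rw [hS b 3]
    fin_cases b <;>
      simp [Fin.sum_univ_four, lower, eta, -mul_eq_zero, -mul_eq_mul_right_iff, -mul_eq_mul_left_iff] at e0 e1 e2 e3 htr hs0 hs1 hs2 hs3 ⊢ <;>
      linarith
  have hQr : ∀ a, (∑ x : Fin 4, S a x * k x) = 0 := by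
    intro a
    rw [← hQ a]
    exact Finset.sum_congr rfl fun x _ => by rw [hS a x]
  have part1 : ∀ b c d, lower k c * S d b - lower k d * S c b =
      (R₀ / 3) * (lower k c * eta d b - lower k d * eta c b) := by
    intro b c d
    have e := hE d c b
    rw [hQr d, hQ c] at e
    rw [hS c b, heta c b]
    linear_combination e
  refine ⟨part1, ?_⟩
  intro a b
  have i0 := part1 b 0 a
  have i1 := part1 b 1 a
  have i2 := part1 b 2 a
  have i3 := part1 b 3 a
  have q : (∑ x : Fin 4, S x b * k x) = 0 := hQ b
  have hlb : lower k b = ∑ x : Fin 4, eta x b * k x := by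
    rw [lower]; exact Finset.sum_congr rfl fun x _ => by rw [heta b x]
  have hmk : minkowski k k = ∑ x : Fin 4, k x * lower k x := by
    simp [minkowski, lower, Fin.sum_univ_four, eta]; try ring
  rw [Fin.sum_univ_four] at q hlb hmk
  linear_combination (-(k 0 * i0) - k 1 * i1 - k 2 * i2 - k 3 * i3)
    + (R₀ / 3 * eta a b - S a b) * hmk - lower k a * q - R₀ / 3 * lower k a * hlb
end

section
/- Let R be an algebraic curvature tensor on Minkowski ℝ⁴ whose Ricci tensor vanishes (Σ_a,c η^{ac} R_{abcd} = 0 for all b,d), and let k ∈ ℝ⁴ be a nonzero null vector with Σ_d R_{abcd} k^d = 0 for all a,b,c. Then for every bivector H there exists a covector q : Fin 4 → ℝ with Σ_a q_a k^a = 0 such that Σ_{c,d} R_{abcd} H^{cd} = k_a q_b - k_b q_a for all a,b (where k_a is the lowered covector of k); that is, every bivector in the range of the curvature map is a null bivector with principal null direction k. -/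
lemma lower_zero (v : Fin 4 → ℝ) : lower v 0 = -v 0 := by simp [lower, eta, Fin.sum_univ_four]
lemma lower_one (v : Fin 4 → ℝ) : lower v 1 = v 1 := by simp [lower, eta, Fin.sum_univ_four]
lemma lower_two (v : Fin 4 → ℝ) : lower v 2 = v 2 := by simp [lower, eta, Fin.sum_univ_four]
lemma lower_three (v : Fin 4 → ℝ) : lower v 3 = v 3 := by simp [lower, eta, Fin.sum_univ_four]

/-- The "type N obstruction" tensor `T_{eab|cd} = k_e R_{abcd} + k_a R_{becd} + k_b R_{eacd}`. -/
def Tk (R : Fin 4 → Fin 4 → Fin 4 → Fin 4 → ℝ) (k : Fin 4 → ℝ) (e a b c d : Fin 4) : ℝ :=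
  lower k e * R a b c d + lower k a * R b e c d + lower k b * R e a c d

/-- Key lemma : `k_0 R_{abcd} = k_a R_{0bcd} - k_b R_{0acd}`. -/
lemma key_lemma (R : Fin 4 → Fin 4 → Fin 4 → Fin 4 → ℝ)
    (h1 : ∀ a b c d, R a b c d = -R b a c d)
    (h2 : ∀ a b c d, R a b c d = -R a b d c)
    (h3 : ∀ a b c d, R a b c d = R c d a b)
    (hRicci : ∀ b d, ∑ a : Fin 4, ∑ c : Fin 4, eta a c * R a b c d = 0)
    (k : Fin 4 → ℝ) (hknull : minkowski k k = 0)
    (hRk : ∀ a b c, ∑ d : Fin 4, R a b c d * k d = 0)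
    (hk00 : k 0 ≠ 0) :
    ∀ a b c d, lower k 0 * R a b c d = lower k a * R 0 b c d - lower k b * R 0 a c d := by
  -- expanded components of hRk
  have hRkE : ∀ a b c, R a b c 0 * k 0 + R a b c 1 * k 1 + R a b c 2 * k 2 + R a b c 3 * k 3
      = 0 := by
    intro a b c; have h := hRk a b c; simpa [Fin.sum_univ_four] using h
  -- Ricci in expanded form
  have RicE : ∀ b d, -(R 0 b 0 d) + R 1 b 1 d + R 2 b 2 d + R 3 b 3 d = 0 := by
    intro b d; have h := hRicci b d; simpa [Fin.sum_univ_four, eta] using h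
  -- the three slot contractions of R with k vanish
  have C3 : ∀ a b d, R a b 0 d * k 0 + R a b 1 d * k 1 + R a b 2 d * k 2 + R a b 3 d * k 3
      = 0 := by
    intro a b d
    linear_combination -hRkE a b d + k 0 * h2 a b 0 d + k 1 * h2 a b 1 d + k 2 * h2 a b 2 d +
      k 3 * h2 a b 3 d
  have C1 : ∀ b c d, R 0 b c d * k 0 + R 1 b c d * k 1 + R 2 b c d * k 2 + R 3 b c d * k 3
      = 0 := by
    intro b c d
    linear_combination -hRkE c d b + k 0 * h3 0 b c d + k 1 * h3 1 b c d + k 2 * h3 2 b c d +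
      k 3 * h3 3 b c d + k 0 * h2 c d 0 b + k 1 * h2 c d 1 b + k 2 * h2 c d 2 b + k 3 * h2 c d 3 b
  have C2 : ∀ a c d, R a 0 c d * k 0 + R a 1 c d * k 1 + R a 2 c d * k 2 + R a 3 c d * k 3
      = 0 := by
    intro a c d
    linear_combination -C1 a c d + k 0 * h1 a 0 c d + k 1 * h1 a 1 c d + k 2 * h1 a 2 c d +
      k 3 * h1 a 3 c d
  -- expanded null condition
  have hnullE : lower k 0 * k 0 + lower k 1 * k 1 + lower k 2 * k 2 + lower k 3 * k 3 = 0 := by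
    rw [lower_zero, lower_one, lower_two, lower_three]
    unfold minkowski at hknull; linarith
  -- F2 : contraction of Tk with k on the first slot vanishes
  have F2E : ∀ a b c d, Tk R k 0 a b c d * k 0 + Tk R k 1 a b c d * k 1 +
      Tk R k 2 a b c d * k 2 + Tk R k 3 a b c d * k 3 = 0 := by
    intro a b c d
    simp only [Tk]
    linear_combination R a b c d * hnullE + lower k a * C2 b c d + lower k b * C1 a c d
  -- F3 : eta-contraction of Tk (slot e against slot c) vanishes
  have F3E : ∀ a b d, -Tk R k 0 a b 0 d + Tk R k 1 a b 1 d + Tk R k 2 a b 2 d +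
      Tk R k 3 a b 3 d = 0 := by
    intro a b d
    simp only [Tk, lower_zero, lower_one, lower_two, lower_three]
    linear_combination C3 a b d +
      lower k a * (h1 b 1 1 d + h1 b 2 2 d + h1 b 3 3 d - h1 b 0 0 d - RicE b d) +
      lower k b * RicE a d
  -- degeneracy and antisymmetry of Tk in its first three slots
  have hdeg1 : ∀ a b c d, Tk R k a a b c d = 0 := by
    intro a b c d; simp only [Tk]
    linear_combination lower k a * h1 a b c d + lower k b / 2 * h1 a a c d
  have hdeg2 : ∀ a b c d, Tk R k b a b c d = 0 := by
    intro a b c d; simp only [Tk]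
    linear_combination lower k b * h1 a b c d + lower k a / 2 * h1 b b c d
  have hdeg3 : ∀ e a c d, Tk R k e a a c d = 0 := by
    intro e a c d; simp only [Tk]
    linear_combination lower k a * h1 a e c d + lower k e / 2 * h1 a a c d
  have hsw1 : ∀ e a b c d, Tk R k e a b c d = -Tk R k a e b c d := by
    intro e a b c d; simp only [Tk]
    linear_combination lower k e * h1 a b c d + lower k a * h1 b e c d + lower k b * h1 e a c d
  have hsw2 : ∀ e a b c d, Tk R k e a b c d = -Tk R k e b a c d := by
    intro e a b c d; simp only [Tk]
    linear_combination lower k e * h1 a b c d + lower k a * h1 b e c d + lower k b * h1 e a c d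
  have hTcd : ∀ e a b c d, Tk R k e a b c d = -Tk R k e a b d c := by
    intro e a b c d; simp only [Tk]
    linear_combination lower k e * h2 a b c d + lower k a * h2 b e c d + lower k b * h2 e a c d
  -- permutation fact for the triple (3,1,2)
  have w312 : ∀ c d, Tk R k 3 1 2 c d = Tk R k 1 2 3 c d := by
    intro c d
    rw [hsw1 3 1 2 c d, hsw2 1 3 2 c d, neg_neg]
  -- s-relations from F2E
  have s1 : ∀ c d, k 0 * Tk R k 0 1 2 c d + k 3 * Tk R k 1 2 3 c d = 0 := by
    intro c d
    linear_combination F2E 1 2 c d - k 1 * hdeg1 1 2 c d - k 2 * hdeg2 1 2 c d -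
      k 3 * w312 c d
  have s2 : ∀ c d, k 0 * Tk R k 0 1 3 c d - k 2 * Tk R k 1 2 3 c d = 0 := by
    intro c d
    linear_combination F2E 1 3 c d - k 1 * hdeg1 1 3 c d - k 3 * hdeg2 1 3 c d -
      k 2 * hsw1 2 1 3 c d
  have s3 : ∀ c d, k 0 * Tk R k 0 2 3 c d + k 1 * Tk R k 1 2 3 c d = 0 := by
    intro c d
    linear_combination F2E 2 3 c d - k 2 * hdeg1 2 3 c d - k 3 * hdeg2 2 3 c d
  -- g-relations from F3E
  have g1 : ∀ d, Tk R k 0 1 2 0 d = Tk R k 1 2 3 3 d := by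
    intro d
    linear_combination -F3E 1 2 d + hdeg1 1 2 1 d + hdeg2 1 2 2 d + w312 3 d
  have g2 : ∀ d, Tk R k 0 1 3 0 d = -Tk R k 1 2 3 2 d := by
    intro d
    linear_combination -F3E 1 3 d + hdeg1 1 3 1 d + hdeg2 1 3 3 d + hsw1 2 1 3 2 d
  have g3 : ∀ d, Tk R k 0 2 3 0 d = Tk R k 1 2 3 1 d := by
    intro d
    linear_combination -F3E 2 3 d + hdeg1 2 3 2 d + hdeg2 2 3 3 d
  -- r-relations
  have r1 : ∀ d, k 0 * Tk R k 1 2 3 1 d + k 1 * Tk R k 1 2 3 0 d = 0 := by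
    intro d; linear_combination s3 0 d - k 0 * g3 d
  have r2 : ∀ d, k 0 * Tk R k 1 2 3 2 d + k 2 * Tk R k 1 2 3 0 d = 0 := by
    intro d; linear_combination k 0 * g2 d - s2 0 d
  have r3 : ∀ d, k 0 * Tk R k 1 2 3 3 d + k 3 * Tk R k 1 2 3 0 d = 0 := by
    intro d; linear_combination s1 0 d - k 0 * g1 d
  -- T(1,2,3)(0,0) = 0
  have h00 : Tk R k 1 2 3 0 0 = 0 := by
    have h := hTcd 1 2 3 0 0; linarith
  -- T(1,2,3)(c,0) = 0 for all c
  have hv : ∀ c, Tk R k 1 2 3 c 0 = 0 := by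
    intro c
    fin_cases c
    · exact h00
    · have h : k 0 * Tk R k 1 2 3 1 0 = 0 := by linear_combination r1 0 - k 1 * h00
      exact (mul_eq_zero.mp h).resolve_left hk00
    · have h : k 0 * Tk R k 1 2 3 2 0 = 0 := by linear_combination r2 0 - k 2 * h00
      exact (mul_eq_zero.mp h).resolve_left hk00
    · have h : k 0 * Tk R k 1 2 3 3 0 = 0 := by linear_combination r3 0 - k 3 * h00
      exact (mul_eq_zero.mp h).resolve_left hk00
  -- T(1,2,3)(0,d) = 0 for all d
  have hv' : ∀ d, Tk R k 1 2 3 0 d = 0 := by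
    intro d
    rw [hTcd 1 2 3 0 d, hv d, neg_zero]
  -- T(1,2,3) = 0
  have hu : ∀ c d, Tk R k 1 2 3 c d = 0 := by
    intro c d
    fin_cases c
    · exact hv' d
    · have h : k 0 * Tk R k 1 2 3 1 d = 0 := by linear_combination r1 d - k 1 * hv' d
      exact (mul_eq_zero.mp h).resolve_left hk00
    · have h : k 0 * Tk R k 1 2 3 2 d = 0 := by linear_combination r2 d - k 2 * hv' d
      exact (mul_eq_zero.mp h).resolve_left hk00
    · have h : k 0 * Tk R k 1 2 3 3 d = 0 := by linear_combination r3 d - k 3 * hv' d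
      exact (mul_eq_zero.mp h).resolve_left hk00
  -- the three remaining basis components vanish
  have Z012 : ∀ c d, Tk R k 0 1 2 c d = 0 := by
    intro c d
    have h : k 0 * Tk R k 0 1 2 c d = 0 := by linear_combination s1 c d - k 3 * hu c d
    exact (mul_eq_zero.mp h).resolve_left hk00
  have Z013 : ∀ c d, Tk R k 0 1 3 c d = 0 := by
    intro c d
    have h : k 0 * Tk R k 0 1 3 c d = 0 := by linear_combination s2 c d + k 2 * hu c d
    exact (mul_eq_zero.mp h).resolve_left hk00
  have Z023 : ∀ c d, Tk R k 0 2 3 c d = 0 := by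
    intro c d
    have h : k 0 * Tk R k 0 2 3 c d = 0 := by linear_combination s3 c d - k 1 * hu c d
    exact (mul_eq_zero.mp h).resolve_left hk00
  -- all components Tk 0 a b vanish
  have keyT : ∀ a b c d, Tk R k 0 a b c d = 0 := by
    intro a b c d
    fin_cases a <;> fin_cases b
    · exact hdeg3 0 0 c d
    · exact hdeg1 0 1 c d
    · exact hdeg1 0 2 c d
    · exact hdeg1 0 3 c d
    · exact hdeg2 1 0 c d
    · exact hdeg3 0 1 c d
    · exact Z012 c d
    · exact Z013 c d
    · exact hdeg2 2 0 c d
    · show Tk R k 0 2 1 c d = 0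
      rw [hsw2 0 2 1 c d, Z012 c d, neg_zero]
    · exact hdeg3 0 2 c d
    · exact Z023 c d
    · exact hdeg2 3 0 c d
    · show Tk R k 0 3 1 c d = 0
      rw [hsw2 0 3 1 c d, Z013 c d, neg_zero]
    · show Tk R k 0 3 2 c d = 0
      rw [hsw2 0 3 2 c d, Z023 c d, neg_zero]
    · exact hdeg3 0 3 c d
  intro a b c d
  have t := keyT a b c d
  simp only [Tk] at t
  linear_combination t - lower k a * h1 b 0 c d

/-- contraction of `R` with `k` on the second slot, expanded. -/
lemma contr2 (R : Fin 4 → Fin 4 → Fin 4 → Fin 4 → ℝ)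
    (h1 : ∀ a b c d, R a b c d = -R b a c d)
    (h2 : ∀ a b c d, R a b c d = -R a b d c)
    (h3 : ∀ a b c d, R a b c d = R c d a b)
    (k : Fin 4 → ℝ)
    (hRk : ∀ a b c, ∑ d : Fin 4, R a b c d * k d = 0) :
    ∀ a c d, R a 0 c d * k 0 + R a 1 c d * k 1 + R a 2 c d * k 2 + R a 3 c d * k 3 = 0 := by
  have hRkE : ∀ a b c, R a b c 0 * k 0 + R a b c 1 * k 1 + R a b c 2 * k 2 + R a b c 3 * k 3
      = 0 := by
    intro a b c; have h := hRk a b c; simpa [Fin.sum_univ_four] using h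
  have C1 : ∀ b c d, R 0 b c d * k 0 + R 1 b c d * k 1 + R 2 b c d * k 2 + R 3 b c d * k 3
      = 0 := by
    intro b c d
    linear_combination -hRkE c d b + k 0 * h3 0 b c d + k 1 * h3 1 b c d + k 2 * h3 2 b c d +
      k 3 * h3 3 b c d + k 0 * h2 c d 0 b + k 1 * h2 c d 1 b + k 2 * h2 c d 2 b + k 3 * h2 c d 3 b
  intro a c d
  linear_combination -C1 a c d + k 0 * h1 a 0 c d + k 1 * h1 a 1 c d + k 2 * h1 a 2 c d +
    k 3 * h1 a 3 c d

set_option maxHeartbeats 2000000 in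
/-- The algebraic content of the vacuum argument: if an algebraic curvature tensor
on Minkowski `ℝ⁴` is Ricci-flat and annihilated by a nonzero null vector `k`
(`R_{abcd}k^d = 0`), then every bivector in the range of the curvature map is a
null bivector with principal null direction `k`: `R_{abcd}H^{cd} = k_a q_b - k_b q_a`
for some covector `q` with `q_a k^a = 0`. -/
theorem ricci_flat_type_N_range_null_bivectors
    (R : Fin 4 → Fin 4 → Fin 4 → Fin 4 → ℝ)
    (h1 : ∀ a b c d, R a b c d = -R b a c d)
    (h2 : ∀ a b c d, R a b c d = -R a b d c)
    (h3 : ∀ a b c d, R a b c d = R c d a b)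
    (h4 : ∀ a b c d, R a b c d + R a c d b + R a d b c = 0)
    (hRicci : ∀ b d, ∑ a : Fin 4, ∑ c : Fin 4, eta a c * R a b c d = 0)
    (k : Fin 4 → ℝ) (hk0 : k ≠ 0) (hknull : minkowski k k = 0)
    (hRk : ∀ a b c, ∑ d : Fin 4, R a b c d * k d = 0) :
    ∀ H : Fin 4 → Fin 4 → ℝ, (∀ a b, H a b = -H b a) →
      ∃ q : Fin 4 → ℝ, (∑ a : Fin 4, q a * k a = 0) ∧
        ∀ a b, (∑ c : Fin 4, ∑ d : Fin 4,
            R a b c d * (∑ e : Fin 4, ∑ f : Fin 4, eta c e * eta d f * H e f))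
          = lower k a * q b - lower k b * q a := by
  intro H hH
  have hk00 : k 0 ≠ 0 := by
    intro h
    apply hk0
    unfold minkowski at hknull
    have e1 : k 1 = 0 := by nlinarith [sq_nonneg (k 1), sq_nonneg (k 2), sq_nonneg (k 3)]
    have e2 : k 2 = 0 := by nlinarith [sq_nonneg (k 1), sq_nonneg (k 2), sq_nonneg (k 3)]
    have e3 : k 3 = 0 := by nlinarith [sq_nonneg (k 1), sq_nonneg (k 2), sq_nonneg (k 3)]
    funext i
    fin_cases i
    · exact h
    · exact e1
    · exact e2
    · exact e3
  have hL : lower k 0 ≠ 0 := by rw [lower_zero]; exact neg_ne_zero.mpr hk00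
  have key := key_lemma R h1 h2 h3 hRicci k hknull hRk hk00
  have C2 := contr2 R h1 h2 h3 k hRk
  refine ⟨fun b => (∑ c : Fin 4, ∑ d : Fin 4,
      R 0 b c d * (∑ e : Fin 4, ∑ f : Fin 4, eta c e * eta d f * H e f)) / lower k 0, ?_, ?_⟩
  · have hG : ∀ c d : Fin 4,
        (∑ e : Fin 4, ∑ f : Fin 4, eta c e * eta d f * H e f) = eta c c * (eta d d * H c d) := by
      intro c d; fin_cases c <;> fin_cases d <;> norm_num [eta, Fin.sum_univ_four]
    simp only [hG]
    simp only [Fin.sum_univ_four]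
    simp (config := {decide := true}) only [eta, if_true, if_false]
    field_simp
    linear_combination H 0 0 * C2 0 0 0 - H 0 1 * C2 0 0 1 - H 0 2 * C2 0 0 2 - H 0 3 * C2 0 0 3 - H 1 0 * C2 0 1 0 + H 1 1 * C2 0 1 1 + H 1 2 * C2 0 1 2 + H 1 3 * C2 0 1 3 - H 2 0 * C2 0 2 0 + H 2 1 * C2 0 2 1 + H 2 2 * C2 0 2 2 + H 2 3 * C2 0 2 3 - H 3 0 * C2 0 3 0 + H 3 1 * C2 0 3 1 + H 3 2 * C2 0 3 2 + H 3 3 * C2 0 3 3 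
  · intro a b
    have hG : ∀ c d : Fin 4,
        (∑ e : Fin 4, ∑ f : Fin 4, eta c e * eta d f * H e f) = eta c c * (eta d d * H c d) := by
      intro c d; fin_cases c <;> fin_cases d <;> norm_num [eta, Fin.sum_univ_four]
    simp only [hG]
    simp only [Fin.sum_univ_four]
    simp (config := {decide := true}) only [eta, if_true, if_false]
    field_simp
    linear_combination H 0 0 * key a b 0 0 - H 0 1 * key a b 0 1 - H 0 2 * key a b 0 2 - H 0 3 * key a b 0 3 - H 1 0 * key a b 1 0 + H 1 1 * key a b 1 1 + H 1 2 * key a b 1 2 + H 1 3 * key a b 1 3 - H 2 0 * key a b 2 0 + H 2 1 * key a b 2 1 + H 2 2 * key a b 2 2 + H 2 3 * key a b 2 3 - H 3 0 * key a b 3 0 + H 3 1 * key a b 3 1 + H 3 2 * key a b 3 2 + H 3 3 * key a b 3 3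
end

section
/- Let (l,n,x,y) be a real null tetrad on Minkowski ℝ⁴ with lowered covectors λ, ν, ξ, υ, and let R be an algebraic curvature tensor on Minkowski ℝ⁴ such that Σ_d R_{abcd} x^d = 0 for all a,b,c and whose Ricci tensor satisfies Σ η^{ac} R_{abcd} = μ λ_b λ_d for all b,d, where μ ∈ ℝ, μ ≠ 0. Then R_{abcd} = μ (λ_a υ_b - λ_b υ_a)(λ_c υ_d - λ_d υ_c) for all a,b,c,d. -/
open Matrix

set_option maxHeartbeats 4000000


def qc (R : Fin 4 → Fin 4 → Fin 4 → Fin 4 → ℝ) (z w v u : Fin 4 → ℝ) : ℝ :=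
  ∑ a : Fin 4, (∑ b : Fin 4, (∑ c : Fin 4, (∑ d : Fin 4, R a b c d * z d) * w c) * v b) * u a

lemma swapCD (R : Fin 4 → Fin 4 → Fin 4 → Fin 4 → ℝ)
    (h2 : ∀ a b c d, R a b c d = -R a b d c) (z w v u : Fin 4 → ℝ) :
    qc R z w v u = -qc R w z v u := by
  unfold qc
  rw [← Finset.sum_neg_distrib]
  refine Finset.sum_congr rfl fun a _ => ?_
  rw [← neg_mul]
  congr 1
  rw [← Finset.sum_neg_distrib]
  refine Finset.sum_congr rfl fun b _ => ?_
  rw [← neg_mul]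
  congr 1
  simp only [Fin.sum_univ_four]
  linear_combination z 0 * w 0 * h2 a b 0 0 + z 1 * w 0 * h2 a b 0 1 + z 2 * w 0 * h2 a b 0 2 + z 3 * w 0 * h2 a b 0 3 + z 0 * w 1 * h2 a b 1 0 + z 1 * w 1 * h2 a b 1 1 + z 2 * w 1 * h2 a b 1 2 + z 3 * w 1 * h2 a b 1 3 + z 0 * w 2 * h2 a b 2 0 + z 1 * w 2 * h2 a b 2 1 + z 2 * w 2 * h2 a b 2 2 + z 3 * w 2 * h2 a b 2 3 + z 0 * w 3 * h2 a b 3 0 + z 1 * w 3 * h2 a b 3 1 + z 2 * w 3 * h2 a b 3 2 + z 3 * w 3 * h2 a b 3 3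

lemma swapAB (R : Fin 4 → Fin 4 → Fin 4 → Fin 4 → ℝ)
    (h1 : ∀ a b c d, R a b c d = -R b a c d) (z w v u : Fin 4 → ℝ) :
    qc R z w v u = -qc R z w u v := by
  simp only [qc, Fin.sum_univ_four]
  linear_combination u 0 * v 0 * w 0 * z 0 * h1 0 0 0 0 + u 0 * v 0 * w 0 * z 1 * h1 0 0 0 1 + u 0 * v 0 * w 0 * z 2 * h1 0 0 0 2 + u 0 * v 0 * w 0 * z 3 * h1 0 0 0 3 + u 0 * v 0 * w 1 * z 0 * h1 0 0 1 0 + u 0 * v 0 * w 1 * z 1 * h1 0 0 1 1 + u 0 * v 0 * w 1 * z 2 * h1 0 0 1 2 + u 0 * v 0 * w 1 * z 3 * h1 0 0 1 3 + u 0 * v 0 * w 2 * z 0 * h1 0 0 2 0 + u 0 * v 0 * w 2 * z 1 * h1 0 0 2 1 + u 0 * v 0 * w 2 * z 2 * h1 0 0 2 2 + u 0 * v 0 * w 2 * z 3 * h1 0 0 2 3 + u 0 * v 0 * w 3 * z 0 * h1 0 0 3 0 + u 0 * v 0 * w 3 * z 1 * h1 0 0 3 1 + u 0 * v 0 * w 3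 * z 2 * h1 0 0 3 2 + u 0 * v 0 * w 3 * z 3 * h1 0 0 3 3 + u 0 * v 1 * w 0 * z 0 * h1 0 1 0 0 + u 0 * v 1 * w 0 * z 1 * h1 0 1 0 1 + u 0 * v 1 * w 0 * z 2 * h1 0 1 0 2 + u 0 * v 1 * w 0 * z 3 * h1 0 1 0 3 + u 0 * v 1 * w 1 * z 0 * h1 0 1 1 0 + u 0 * v 1 * w 1 * z 1 * h1 0 1 1 1 + u 0 * v 1 * w 1 * z 2 * h1 0 1 1 2 + u 0 * v 1 * w 1 * z 3 * h1 0 1 1 3 + u 0 * v 1 * w 2 * z 0 * h1 0 1 2 0 + u 0 * v 1 * w 2 * z 1 * h1 0 1 2 1 + u 0 * v 1 * w 2 * z 2 * h1 0 1 2 2 + u 0 * v 1 * w 2 * z 3 * h1 0 1 2 3 + u 0 * v 1 * w 3 * z 0 * h1 0 1 3 0 + u 0 * v 1 * w 3 * z 1 * h1 0 1 3 1 + u 0 * v 1 * w 3 * z 2 * h1 0 1 3 2 + u 0 * v 1 * w 3 * z 3 * h1 0 1 3 3 + u 0 * v 2 * w 0 * z 0 * h1 0 2 0 0 + u 0 *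 v 2 * w 0 * z 1 * h1 0 2 0 1 + u 0 * v 2 * w 0 * z 2 * h1 0 2 0 2 + u 0 * v 2 * w 0 * z 3 * h1 0 2 0 3 + u 0 * v 2 * w 1 * z 0 * h1 0 2 1 0 + u 0 * v 2 * w 1 * z 1 * h1 0 2 1 1 + u 0 * v 2 * w 1 * z 2 * h1 0 2 1 2 + u 0 * v 2 * w 1 * z 3 * h1 0 2 1 3 + u 0 * v 2 * w 2 * z 0 * h1 0 2 2 0 + u 0 * v 2 * w 2 * z 1 * h1 0 2 2 1 + u 0 * v 2 * w 2 * z 2 * h1 0 2 2 2 + u 0 * v 2 * w 2 * z 3 * h1 0 2 2 3 + u 0 * v 2 * w 3 * z 0 * h1 0 2 3 0 + u 0 * v 2 * w 3 * z 1 * h1 0 2 3 1 + u 0 * v 2 * w 3 * z 2 * h1 0 2 3 2 + u 0 * v 2 * w 3 * z 3 * h1 0 2 3 3 + u 0 * v 3 * w 0 * z 0 * h1 0 3 0 0 + u 0 * v 3 * w 0 * z 1 * h1 0 3 0 1 + u 0 * v 3 * w 0 * z 2 * h1 0 3 0 2 + u 0 * v 3 * w 0 * z 3 * h1 0 3 0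 3 + u 0 * v 3 * w 1 * z 0 * h1 0 3 1 0 + u 0 * v 3 * w 1 * z 1 * h1 0 3 1 1 + u 0 * v 3 * w 1 * z 2 * h1 0 3 1 2 + u 0 * v 3 * w 1 * z 3 * h1 0 3 1 3 + u 0 * v 3 * w 2 * z 0 * h1 0 3 2 0 + u 0 * v 3 * w 2 * z 1 * h1 0 3 2 1 + u 0 * v 3 * w 2 * z 2 * h1 0 3 2 2 + u 0 * v 3 * w 2 * z 3 * h1 0 3 2 3 + u 0 * v 3 * w 3 * z 0 * h1 0 3 3 0 + u 0 * v 3 * w 3 * z 1 * h1 0 3 3 1 + u 0 * v 3 * w 3 * z 2 * h1 0 3 3 2 + u 0 * v 3 * w 3 * z 3 * h1 0 3 3 3 + u 1 * v 0 * w 0 * z 0 * h1 1 0 0 0 + u 1 * v 0 * w 0 * z 1 * h1 1 0 0 1 + u 1 * v 0 * w 0 * z 2 * h1 1 0 0 2 + u 1 * v 0 * w 0 * z 3 * h1 1 0 0 3 + u 1 * v 0 * w 1 * z 0 * h1 1 0 1 0 + u 1 * v 0 * w 1 * z 1 * h1 1 0 1 1 + u 1 * v 0 * w 1 * z 2 *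 h1 1 0 1 2 + u 1 * v 0 * w 1 * z 3 * h1 1 0 1 3 + u 1 * v 0 * w 2 * z 0 * h1 1 0 2 0 + u 1 * v 0 * w 2 * z 1 * h1 1 0 2 1 + u 1 * v 0 * w 2 * z 2 * h1 1 0 2 2 + u 1 * v 0 * w 2 * z 3 * h1 1 0 2 3 + u 1 * v 0 * w 3 * z 0 * h1 1 0 3 0 + u 1 * v 0 * w 3 * z 1 * h1 1 0 3 1 + u 1 * v 0 * w 3 * z 2 * h1 1 0 3 2 + u 1 * v 0 * w 3 * z 3 * h1 1 0 3 3 + u 1 * v 1 * w 0 * z 0 * h1 1 1 0 0 + u 1 * v 1 * w 0 * z 1 * h1 1 1 0 1 + u 1 * v 1 * w 0 * z 2 * h1 1 1 0 2 + u 1 * v 1 * w 0 * z 3 * h1 1 1 0 3 + u 1 * v 1 * w 1 * z 0 * h1 1 1 1 0 + u 1 * v 1 * w 1 * z 1 * h1 1 1 1 1 + u 1 * v 1 * w 1 * z 2 * h1 1 1 1 2 + u 1 * v 1 * w 1 * z 3 * h1 1 1 1 3 + u 1 * v 1 * w 2 * z 0 * h1 1 1 2 0 + u 1 * v 1 * w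 2 * z 1 * h1 1 1 2 1 + u 1 * v 1 * w 2 * z 2 * h1 1 1 2 2 + u 1 * v 1 * w 2 * z 3 * h1 1 1 2 3 + u 1 * v 1 * w 3 * z 0 * h1 1 1 3 0 + u 1 * v 1 * w 3 * z 1 * h1 1 1 3 1 + u 1 * v 1 * w 3 * z 2 * h1 1 1 3 2 + u 1 * v 1 * w 3 * z 3 * h1 1 1 3 3 + u 1 * v 2 * w 0 * z 0 * h1 1 2 0 0 + u 1 * v 2 * w 0 * z 1 * h1 1 2 0 1 + u 1 * v 2 * w 0 * z 2 * h1 1 2 0 2 + u 1 * v 2 * w 0 * z 3 * h1 1 2 0 3 + u 1 * v 2 * w 1 * z 0 * h1 1 2 1 0 + u 1 * v 2 * w 1 * z 1 * h1 1 2 1 1 + u 1 * v 2 * w 1 * z 2 * h1 1 2 1 2 + u 1 * v 2 * w 1 * z 3 * h1 1 2 1 3 + u 1 * v 2 * w 2 * z 0 * h1 1 2 2 0 + u 1 * v 2 * w 2 * z 1 * h1 1 2 2 1 + u 1 * v 2 * w 2 * z 2 * h1 1 2 2 2 + u 1 * v 2 * w 2 * z 3 * h1 1 2 2 3 + u 1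 * v 2 * w 3 * z 0 * h1 1 2 3 0 + u 1 * v 2 * w 3 * z 1 * h1 1 2 3 1 + u 1 * v 2 * w 3 * z 2 * h1 1 2 3 2 + u 1 * v 2 * w 3 * z 3 * h1 1 2 3 3 + u 1 * v 3 * w 0 * z 0 * h1 1 3 0 0 + u 1 * v 3 * w 0 * z 1 * h1 1 3 0 1 + u 1 * v 3 * w 0 * z 2 * h1 1 3 0 2 + u 1 * v 3 * w 0 * z 3 * h1 1 3 0 3 + u 1 * v 3 * w 1 * z 0 * h1 1 3 1 0 + u 1 * v 3 * w 1 * z 1 * h1 1 3 1 1 + u 1 * v 3 * w 1 * z 2 * h1 1 3 1 2 + u 1 * v 3 * w 1 * z 3 * h1 1 3 1 3 + u 1 * v 3 * w 2 * z 0 * h1 1 3 2 0 + u 1 * v 3 * w 2 * z 1 * h1 1 3 2 1 + u 1 * v 3 * w 2 * z 2 * h1 1 3 2 2 + u 1 * v 3 * w 2 * z 3 * h1 1 3 2 3 + u 1 * v 3 * w 3 * z 0 * h1 1 3 3 0 + u 1 * v 3 * w 3 * z 1 * h1 1 3 3 1 + u 1 * v 3 * w 3 * z 2 * h1 1 3 3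 2 + u 1 * v 3 * w 3 * z 3 * h1 1 3 3 3 + u 2 * v 0 * w 0 * z 0 * h1 2 0 0 0 + u 2 * v 0 * w 0 * z 1 * h1 2 0 0 1 + u 2 * v 0 * w 0 * z 2 * h1 2 0 0 2 + u 2 * v 0 * w 0 * z 3 * h1 2 0 0 3 + u 2 * v 0 * w 1 * z 0 * h1 2 0 1 0 + u 2 * v 0 * w 1 * z 1 * h1 2 0 1 1 + u 2 * v 0 * w 1 * z 2 * h1 2 0 1 2 + u 2 * v 0 * w 1 * z 3 * h1 2 0 1 3 + u 2 * v 0 * w 2 * z 0 * h1 2 0 2 0 + u 2 * v 0 * w 2 * z 1 * h1 2 0 2 1 + u 2 * v 0 * w 2 * z 2 * h1 2 0 2 2 + u 2 * v 0 * w 2 * z 3 * h1 2 0 2 3 + u 2 * v 0 * w 3 * z 0 * h1 2 0 3 0 + u 2 * v 0 * w 3 * z 1 * h1 2 0 3 1 + u 2 * v 0 * w 3 * z 2 * h1 2 0 3 2 + u 2 * v 0 * w 3 * z 3 * h1 2 0 3 3 + u 2 * v 1 * w 0 * z 0 * h1 2 1 0 0 + u 2 * v 1 * w 0 * z 1 *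 h1 2 1 0 1 + u 2 * v 1 * w 0 * z 2 * h1 2 1 0 2 + u 2 * v 1 * w 0 * z 3 * h1 2 1 0 3 + u 2 * v 1 * w 1 * z 0 * h1 2 1 1 0 + u 2 * v 1 * w 1 * z 1 * h1 2 1 1 1 + u 2 * v 1 * w 1 * z 2 * h1 2 1 1 2 + u 2 * v 1 * w 1 * z 3 * h1 2 1 1 3 + u 2 * v 1 * w 2 * z 0 * h1 2 1 2 0 + u 2 * v 1 * w 2 * z 1 * h1 2 1 2 1 + u 2 * v 1 * w 2 * z 2 * h1 2 1 2 2 + u 2 * v 1 * w 2 * z 3 * h1 2 1 2 3 + u 2 * v 1 * w 3 * z 0 * h1 2 1 3 0 + u 2 * v 1 * w 3 * z 1 * h1 2 1 3 1 + u 2 * v 1 * w 3 * z 2 * h1 2 1 3 2 + u 2 * v 1 * w 3 * z 3 * h1 2 1 3 3 + u 2 * v 2 * w 0 * z 0 * h1 2 2 0 0 + u 2 * v 2 * w 0 * z 1 * h1 2 2 0 1 + u 2 * v 2 * w 0 * z 2 * h1 2 2 0 2 + u 2 * v 2 * w 0 * z 3 * h1 2 2 0 3 + u 2 * v 2 * w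 1 * z 0 * h1 2 2 1 0 + u 2 * v 2 * w 1 * z 1 * h1 2 2 1 1 + u 2 * v 2 * w 1 * z 2 * h1 2 2 1 2 + u 2 * v 2 * w 1 * z 3 * h1 2 2 1 3 + u 2 * v 2 * w 2 * z 0 * h1 2 2 2 0 + u 2 * v 2 * w 2 * z 1 * h1 2 2 2 1 + u 2 * v 2 * w 2 * z 2 * h1 2 2 2 2 + u 2 * v 2 * w 2 * z 3 * h1 2 2 2 3 + u 2 * v 2 * w 3 * z 0 * h1 2 2 3 0 + u 2 * v 2 * w 3 * z 1 * h1 2 2 3 1 + u 2 * v 2 * w 3 * z 2 * h1 2 2 3 2 + u 2 * v 2 * w 3 * z 3 * h1 2 2 3 3 + u 2 * v 3 * w 0 * z 0 * h1 2 3 0 0 + u 2 * v 3 * w 0 * z 1 * h1 2 3 0 1 + u 2 * v 3 * w 0 * z 2 * h1 2 3 0 2 + u 2 * v 3 * w 0 * z 3 * h1 2 3 0 3 + u 2 * v 3 * w 1 * z 0 * h1 2 3 1 0 + u 2 * v 3 * w 1 * z 1 * h1 2 3 1 1 + u 2 * v 3 * w 1 * z 2 * h1 2 3 1 2 + u 2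 * v 3 * w 1 * z 3 * h1 2 3 1 3 + u 2 * v 3 * w 2 * z 0 * h1 2 3 2 0 + u 2 * v 3 * w 2 * z 1 * h1 2 3 2 1 + u 2 * v 3 * w 2 * z 2 * h1 2 3 2 2 + u 2 * v 3 * w 2 * z 3 * h1 2 3 2 3 + u 2 * v 3 * w 3 * z 0 * h1 2 3 3 0 + u 2 * v 3 * w 3 * z 1 * h1 2 3 3 1 + u 2 * v 3 * w 3 * z 2 * h1 2 3 3 2 + u 2 * v 3 * w 3 * z 3 * h1 2 3 3 3 + u 3 * v 0 * w 0 * z 0 * h1 3 0 0 0 + u 3 * v 0 * w 0 * z 1 * h1 3 0 0 1 + u 3 * v 0 * w 0 * z 2 * h1 3 0 0 2 + u 3 * v 0 * w 0 * z 3 * h1 3 0 0 3 + u 3 * v 0 * w 1 * z 0 * h1 3 0 1 0 + u 3 * v 0 * w 1 * z 1 * h1 3 0 1 1 + u 3 * v 0 * w 1 * z 2 * h1 3 0 1 2 + u 3 * v 0 * w 1 * z 3 * h1 3 0 1 3 + u 3 * v 0 * w 2 * z 0 * h1 3 0 2 0 + u 3 * v 0 * w 2 * z 1 * h1 3 0 2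 1 + u 3 * v 0 * w 2 * z 2 * h1 3 0 2 2 + u 3 * v 0 * w 2 * z 3 * h1 3 0 2 3 + u 3 * v 0 * w 3 * z 0 * h1 3 0 3 0 + u 3 * v 0 * w 3 * z 1 * h1 3 0 3 1 + u 3 * v 0 * w 3 * z 2 * h1 3 0 3 2 + u 3 * v 0 * w 3 * z 3 * h1 3 0 3 3 + u 3 * v 1 * w 0 * z 0 * h1 3 1 0 0 + u 3 * v 1 * w 0 * z 1 * h1 3 1 0 1 + u 3 * v 1 * w 0 * z 2 * h1 3 1 0 2 + u 3 * v 1 * w 0 * z 3 * h1 3 1 0 3 + u 3 * v 1 * w 1 * z 0 * h1 3 1 1 0 + u 3 * v 1 * w 1 * z 1 * h1 3 1 1 1 + u 3 * v 1 * w 1 * z 2 * h1 3 1 1 2 + u 3 * v 1 * w 1 * z 3 * h1 3 1 1 3 + u 3 * v 1 * w 2 * z 0 * h1 3 1 2 0 + u 3 * v 1 * w 2 * z 1 * h1 3 1 2 1 + u 3 * v 1 * w 2 * z 2 * h1 3 1 2 2 + u 3 * v 1 * w 2 * z 3 * h1 3 1 2 3 + u 3 * v 1 * w 3 * z 0 *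 h1 3 1 3 0 + u 3 * v 1 * w 3 * z 1 * h1 3 1 3 1 + u 3 * v 1 * w 3 * z 2 * h1 3 1 3 2 + u 3 * v 1 * w 3 * z 3 * h1 3 1 3 3 + u 3 * v 2 * w 0 * z 0 * h1 3 2 0 0 + u 3 * v 2 * w 0 * z 1 * h1 3 2 0 1 + u 3 * v 2 * w 0 * z 2 * h1 3 2 0 2 + u 3 * v 2 * w 0 * z 3 * h1 3 2 0 3 + u 3 * v 2 * w 1 * z 0 * h1 3 2 1 0 + u 3 * v 2 * w 1 * z 1 * h1 3 2 1 1 + u 3 * v 2 * w 1 * z 2 * h1 3 2 1 2 + u 3 * v 2 * w 1 * z 3 * h1 3 2 1 3 + u 3 * v 2 * w 2 * z 0 * h1 3 2 2 0 + u 3 * v 2 * w 2 * z 1 * h1 3 2 2 1 + u 3 * v 2 * w 2 * z 2 * h1 3 2 2 2 + u 3 * v 2 * w 2 * z 3 * h1 3 2 2 3 + u 3 * v 2 * w 3 * z 0 * h1 3 2 3 0 + u 3 * v 2 * w 3 * z 1 * h1 3 2 3 1 + u 3 * v 2 * w 3 * z 2 * h1 3 2 3 2 + u 3 * v 2 * w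 3 * z 3 * h1 3 2 3 3 + u 3 * v 3 * w 0 * z 0 * h1 3 3 0 0 + u 3 * v 3 * w 0 * z 1 * h1 3 3 0 1 + u 3 * v 3 * w 0 * z 2 * h1 3 3 0 2 + u 3 * v 3 * w 0 * z 3 * h1 3 3 0 3 + u 3 * v 3 * w 1 * z 0 * h1 3 3 1 0 + u 3 * v 3 * w 1 * z 1 * h1 3 3 1 1 + u 3 * v 3 * w 1 * z 2 * h1 3 3 1 2 + u 3 * v 3 * w 1 * z 3 * h1 3 3 1 3 + u 3 * v 3 * w 2 * z 0 * h1 3 3 2 0 + u 3 * v 3 * w 2 * z 1 * h1 3 3 2 1 + u 3 * v 3 * w 2 * z 2 * h1 3 3 2 2 + u 3 * v 3 * w 2 * z 3 * h1 3 3 2 3 + u 3 * v 3 * w 3 * z 0 * h1 3 3 3 0 + u 3 * v 3 * w 3 * z 1 * h1 3 3 3 1 + u 3 * v 3 * w 3 * z 2 * h1 3 3 3 2 + u 3 * v 3 * w 3 * z 3 * h1 3 3 3 3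

lemma swapPR (R : Fin 4 → Fin 4 → Fin 4 → Fin 4 → ℝ)
    (h3 : ∀ a b c d, R a b c d = R c d a b) (z w v u : Fin 4 → ℝ) :
    qc R z w v u = qc R v u z w := by
  simp only [qc, Fin.sum_univ_four]
  linear_combination u 0 * v 0 * w 0 * z 0 * h3 0 0 0 0 + u 0 * v 0 * w 0 * z 1 * h3 0 0 0 1 + u 0 * v 0 * w 0 * z 2 * h3 0 0 0 2 + u 0 * v 0 * w 0 * z 3 * h3 0 0 0 3 + u 0 * v 0 * w 1 * z 0 * h3 0 0 1 0 + u 0 * v 0 * w 1 * z 1 * h3 0 0 1 1 + u 0 * v 0 * w 1 * z 2 * h3 0 0 1 2 + u 0 * v 0 * w 1 * z 3 * h3 0 0 1 3 + u 0 * v 0 * w 2 * z 0 * h3 0 0 2 0 + u 0 * v 0 * w 2 * z 1 * h3 0 0 2 1 + u 0 * v 0 * w 2 * z 2 * h3 0 0 2 2 + u 0 * v 0 * w 2 * z 3 * h3 0 0 2 3 + u 0 * v 0 * w 3 * z 0 * h3 0 0 3 0 + u 0 * v 0 * w 3 * z 1 * h3 0 0 3 1 + u 0 * v 0 * w 3 *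 z 2 * h3 0 0 3 2 + u 0 * v 0 * w 3 * z 3 * h3 0 0 3 3 + u 0 * v 1 * w 0 * z 0 * h3 0 1 0 0 + u 0 * v 1 * w 0 * z 1 * h3 0 1 0 1 + u 0 * v 1 * w 0 * z 2 * h3 0 1 0 2 + u 0 * v 1 * w 0 * z 3 * h3 0 1 0 3 + u 0 * v 1 * w 1 * z 0 * h3 0 1 1 0 + u 0 * v 1 * w 1 * z 1 * h3 0 1 1 1 + u 0 * v 1 * w 1 * z 2 * h3 0 1 1 2 + u 0 * v 1 * w 1 * z 3 * h3 0 1 1 3 + u 0 * v 1 * w 2 * z 0 * h3 0 1 2 0 + u 0 * v 1 * w 2 * z 1 * h3 0 1 2 1 + u 0 * v 1 * w 2 * z 2 * h3 0 1 2 2 + u 0 * v 1 * w 2 * z 3 * h3 0 1 2 3 + u 0 * v 1 * w 3 * z 0 * h3 0 1 3 0 + u 0 * v 1 * w 3 * z 1 * h3 0 1 3 1 + u 0 * v 1 * w 3 * z 2 * h3 0 1 3 2 + u 0 * v 1 * w 3 * z 3 * h3 0 1 3 3 + u 0 * v 2 * w 0 * z 0 * h3 0 2 0 0 + u 0 * v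 2 * w 0 * z 1 * h3 0 2 0 1 + u 0 * v 2 * w 0 * z 2 * h3 0 2 0 2 + u 0 * v 2 * w 0 * z 3 * h3 0 2 0 3 + u 0 * v 2 * w 1 * z 0 * h3 0 2 1 0 + u 0 * v 2 * w 1 * z 1 * h3 0 2 1 1 + u 0 * v 2 * w 1 * z 2 * h3 0 2 1 2 + u 0 * v 2 * w 1 * z 3 * h3 0 2 1 3 + u 0 * v 2 * w 2 * z 0 * h3 0 2 2 0 + u 0 * v 2 * w 2 * z 1 * h3 0 2 2 1 + u 0 * v 2 * w 2 * z 2 * h3 0 2 2 2 + u 0 * v 2 * w 2 * z 3 * h3 0 2 2 3 + u 0 * v 2 * w 3 * z 0 * h3 0 2 3 0 + u 0 * v 2 * w 3 * z 1 * h3 0 2 3 1 + u 0 * v 2 * w 3 * z 2 * h3 0 2 3 2 + u 0 * v 2 * w 3 * z 3 * h3 0 2 3 3 + u 0 * v 3 * w 0 * z 0 * h3 0 3 0 0 + u 0 * v 3 * w 0 * z 1 * h3 0 3 0 1 + u 0 * v 3 * w 0 * z 2 * h3 0 3 0 2 + u 0 * v 3 * w 0 * z 3 * h3 0 3 0 3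 + u 0 * v 3 * w 1 * z 0 * h3 0 3 1 0 + u 0 * v 3 * w 1 * z 1 * h3 0 3 1 1 + u 0 * v 3 * w 1 * z 2 * h3 0 3 1 2 + u 0 * v 3 * w 1 * z 3 * h3 0 3 1 3 + u 0 * v 3 * w 2 * z 0 * h3 0 3 2 0 + u 0 * v 3 * w 2 * z 1 * h3 0 3 2 1 + u 0 * v 3 * w 2 * z 2 * h3 0 3 2 2 + u 0 * v 3 * w 2 * z 3 * h3 0 3 2 3 + u 0 * v 3 * w 3 * z 0 * h3 0 3 3 0 + u 0 * v 3 * w 3 * z 1 * h3 0 3 3 1 + u 0 * v 3 * w 3 * z 2 * h3 0 3 3 2 + u 0 * v 3 * w 3 * z 3 * h3 0 3 3 3 + u 1 * v 0 * w 0 * z 0 * h3 1 0 0 0 + u 1 * v 0 * w 0 * z 1 * h3 1 0 0 1 + u 1 * v 0 * w 0 * z 2 * h3 1 0 0 2 + u 1 * v 0 * w 0 * z 3 * h3 1 0 0 3 + u 1 * v 0 * w 1 * z 0 * h3 1 0 1 0 + u 1 * v 0 * w 1 * z 1 * h3 1 0 1 1 + u 1 * v 0 * w 1 * z 2 * h3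 1 0 1 2 + u 1 * v 0 * w 1 * z 3 * h3 1 0 1 3 + u 1 * v 0 * w 2 * z 0 * h3 1 0 2 0 + u 1 * v 0 * w 2 * z 1 * h3 1 0 2 1 + u 1 * v 0 * w 2 * z 2 * h3 1 0 2 2 + u 1 * v 0 * w 2 * z 3 * h3 1 0 2 3 + u 1 * v 0 * w 3 * z 0 * h3 1 0 3 0 + u 1 * v 0 * w 3 * z 1 * h3 1 0 3 1 + u 1 * v 0 * w 3 * z 2 * h3 1 0 3 2 + u 1 * v 0 * w 3 * z 3 * h3 1 0 3 3 + u 1 * v 1 * w 0 * z 0 * h3 1 1 0 0 + u 1 * v 1 * w 0 * z 1 * h3 1 1 0 1 + u 1 * v 1 * w 0 * z 2 * h3 1 1 0 2 + u 1 * v 1 * w 0 * z 3 * h3 1 1 0 3 + u 1 * v 1 * w 1 * z 0 * h3 1 1 1 0 + u 1 * v 1 * w 1 * z 1 * h3 1 1 1 1 + u 1 * v 1 * w 1 * z 2 * h3 1 1 1 2 + u 1 * v 1 * w 1 * z 3 * h3 1 1 1 3 + u 1 * v 1 * w 2 * z 0 * h3 1 1 2 0 + u 1 * v 1 * w 2 *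 z 1 * h3 1 1 2 1 + u 1 * v 1 * w 2 * z 2 * h3 1 1 2 2 + u 1 * v 1 * w 2 * z 3 * h3 1 1 2 3 + u 1 * v 1 * w 3 * z 0 * h3 1 1 3 0 + u 1 * v 1 * w 3 * z 1 * h3 1 1 3 1 + u 1 * v 1 * w 3 * z 2 * h3 1 1 3 2 + u 1 * v 1 * w 3 * z 3 * h3 1 1 3 3 + u 1 * v 2 * w 0 * z 0 * h3 1 2 0 0 + u 1 * v 2 * w 0 * z 1 * h3 1 2 0 1 + u 1 * v 2 * w 0 * z 2 * h3 1 2 0 2 + u 1 * v 2 * w 0 * z 3 * h3 1 2 0 3 + u 1 * v 2 * w 1 * z 0 * h3 1 2 1 0 + u 1 * v 2 * w 1 * z 1 * h3 1 2 1 1 + u 1 * v 2 * w 1 * z 2 * h3 1 2 1 2 + u 1 * v 2 * w 1 * z 3 * h3 1 2 1 3 + u 1 * v 2 * w 2 * z 0 * h3 1 2 2 0 + u 1 * v 2 * w 2 * z 1 * h3 1 2 2 1 + u 1 * v 2 * w 2 * z 2 * h3 1 2 2 2 + u 1 * v 2 * w 2 * z 3 * h3 1 2 2 3 + u 1 * v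 2 * w 3 * z 0 * h3 1 2 3 0 + u 1 * v 2 * w 3 * z 1 * h3 1 2 3 1 + u 1 * v 2 * w 3 * z 2 * h3 1 2 3 2 + u 1 * v 2 * w 3 * z 3 * h3 1 2 3 3 + u 1 * v 3 * w 0 * z 0 * h3 1 3 0 0 + u 1 * v 3 * w 0 * z 1 * h3 1 3 0 1 + u 1 * v 3 * w 0 * z 2 * h3 1 3 0 2 + u 1 * v 3 * w 0 * z 3 * h3 1 3 0 3 + u 1 * v 3 * w 1 * z 0 * h3 1 3 1 0 + u 1 * v 3 * w 1 * z 1 * h3 1 3 1 1 + u 1 * v 3 * w 1 * z 2 * h3 1 3 1 2 + u 1 * v 3 * w 1 * z 3 * h3 1 3 1 3 + u 1 * v 3 * w 2 * z 0 * h3 1 3 2 0 + u 1 * v 3 * w 2 * z 1 * h3 1 3 2 1 + u 1 * v 3 * w 2 * z 2 * h3 1 3 2 2 + u 1 * v 3 * w 2 * z 3 * h3 1 3 2 3 + u 1 * v 3 * w 3 * z 0 * h3 1 3 3 0 + u 1 * v 3 * w 3 * z 1 * h3 1 3 3 1 + u 1 * v 3 * w 3 * z 2 * h3 1 3 3 2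 + u 1 * v 3 * w 3 * z 3 * h3 1 3 3 3 + u 2 * v 0 * w 0 * z 0 * h3 2 0 0 0 + u 2 * v 0 * w 0 * z 1 * h3 2 0 0 1 + u 2 * v 0 * w 0 * z 2 * h3 2 0 0 2 + u 2 * v 0 * w 0 * z 3 * h3 2 0 0 3 + u 2 * v 0 * w 1 * z 0 * h3 2 0 1 0 + u 2 * v 0 * w 1 * z 1 * h3 2 0 1 1 + u 2 * v 0 * w 1 * z 2 * h3 2 0 1 2 + u 2 * v 0 * w 1 * z 3 * h3 2 0 1 3 + u 2 * v 0 * w 2 * z 0 * h3 2 0 2 0 + u 2 * v 0 * w 2 * z 1 * h3 2 0 2 1 + u 2 * v 0 * w 2 * z 2 * h3 2 0 2 2 + u 2 * v 0 * w 2 * z 3 * h3 2 0 2 3 + u 2 * v 0 * w 3 * z 0 * h3 2 0 3 0 + u 2 * v 0 * w 3 * z 1 * h3 2 0 3 1 + u 2 * v 0 * w 3 * z 2 * h3 2 0 3 2 + u 2 * v 0 * w 3 * z 3 * h3 2 0 3 3 + u 2 * v 1 * w 0 * z 0 * h3 2 1 0 0 + u 2 * v 1 * w 0 * z 1 * h3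 2 1 0 1 + u 2 * v 1 * w 0 * z 2 * h3 2 1 0 2 + u 2 * v 1 * w 0 * z 3 * h3 2 1 0 3 + u 2 * v 1 * w 1 * z 0 * h3 2 1 1 0 + u 2 * v 1 * w 1 * z 1 * h3 2 1 1 1 + u 2 * v 1 * w 1 * z 2 * h3 2 1 1 2 + u 2 * v 1 * w 1 * z 3 * h3 2 1 1 3 + u 2 * v 1 * w 2 * z 0 * h3 2 1 2 0 + u 2 * v 1 * w 2 * z 1 * h3 2 1 2 1 + u 2 * v 1 * w 2 * z 2 * h3 2 1 2 2 + u 2 * v 1 * w 2 * z 3 * h3 2 1 2 3 + u 2 * v 1 * w 3 * z 0 * h3 2 1 3 0 + u 2 * v 1 * w 3 * z 1 * h3 2 1 3 1 + u 2 * v 1 * w 3 * z 2 * h3 2 1 3 2 + u 2 * v 1 * w 3 * z 3 * h3 2 1 3 3 + u 2 * v 2 * w 0 * z 0 * h3 2 2 0 0 + u 2 * v 2 * w 0 * z 1 * h3 2 2 0 1 + u 2 * v 2 * w 0 * z 2 * h3 2 2 0 2 + u 2 * v 2 * w 0 * z 3 * h3 2 2 0 3 + u 2 * v 2 * w 1 *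 z 0 * h3 2 2 1 0 + u 2 * v 2 * w 1 * z 1 * h3 2 2 1 1 + u 2 * v 2 * w 1 * z 2 * h3 2 2 1 2 + u 2 * v 2 * w 1 * z 3 * h3 2 2 1 3 + u 2 * v 2 * w 2 * z 0 * h3 2 2 2 0 + u 2 * v 2 * w 2 * z 1 * h3 2 2 2 1 + u 2 * v 2 * w 2 * z 2 * h3 2 2 2 2 + u 2 * v 2 * w 2 * z 3 * h3 2 2 2 3 + u 2 * v 2 * w 3 * z 0 * h3 2 2 3 0 + u 2 * v 2 * w 3 * z 1 * h3 2 2 3 1 + u 2 * v 2 * w 3 * z 2 * h3 2 2 3 2 + u 2 * v 2 * w 3 * z 3 * h3 2 2 3 3 + u 2 * v 3 * w 0 * z 0 * h3 2 3 0 0 + u 2 * v 3 * w 0 * z 1 * h3 2 3 0 1 + u 2 * v 3 * w 0 * z 2 * h3 2 3 0 2 + u 2 * v 3 * w 0 * z 3 * h3 2 3 0 3 + u 2 * v 3 * w 1 * z 0 * h3 2 3 1 0 + u 2 * v 3 * w 1 * z 1 * h3 2 3 1 1 + u 2 * v 3 * w 1 * z 2 * h3 2 3 1 2 + u 2 * v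 3 * w 1 * z 3 * h3 2 3 1 3 + u 2 * v 3 * w 2 * z 0 * h3 2 3 2 0 + u 2 * v 3 * w 2 * z 1 * h3 2 3 2 1 + u 2 * v 3 * w 2 * z 2 * h3 2 3 2 2 + u 2 * v 3 * w 2 * z 3 * h3 2 3 2 3 + u 2 * v 3 * w 3 * z 0 * h3 2 3 3 0 + u 2 * v 3 * w 3 * z 1 * h3 2 3 3 1 + u 2 * v 3 * w 3 * z 2 * h3 2 3 3 2 + u 2 * v 3 * w 3 * z 3 * h3 2 3 3 3 + u 3 * v 0 * w 0 * z 0 * h3 3 0 0 0 + u 3 * v 0 * w 0 * z 1 * h3 3 0 0 1 + u 3 * v 0 * w 0 * z 2 * h3 3 0 0 2 + u 3 * v 0 * w 0 * z 3 * h3 3 0 0 3 + u 3 * v 0 * w 1 * z 0 * h3 3 0 1 0 + u 3 * v 0 * w 1 * z 1 * h3 3 0 1 1 + u 3 * v 0 * w 1 * z 2 * h3 3 0 1 2 + u 3 * v 0 * w 1 * z 3 * h3 3 0 1 3 + u 3 * v 0 * w 2 * z 0 * h3 3 0 2 0 + u 3 * v 0 * w 2 * z 1 * h3 3 0 2 1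 + u 3 * v 0 * w 2 * z 2 * h3 3 0 2 2 + u 3 * v 0 * w 2 * z 3 * h3 3 0 2 3 + u 3 * v 0 * w 3 * z 0 * h3 3 0 3 0 + u 3 * v 0 * w 3 * z 1 * h3 3 0 3 1 + u 3 * v 0 * w 3 * z 2 * h3 3 0 3 2 + u 3 * v 0 * w 3 * z 3 * h3 3 0 3 3 + u 3 * v 1 * w 0 * z 0 * h3 3 1 0 0 + u 3 * v 1 * w 0 * z 1 * h3 3 1 0 1 + u 3 * v 1 * w 0 * z 2 * h3 3 1 0 2 + u 3 * v 1 * w 0 * z 3 * h3 3 1 0 3 + u 3 * v 1 * w 1 * z 0 * h3 3 1 1 0 + u 3 * v 1 * w 1 * z 1 * h3 3 1 1 1 + u 3 * v 1 * w 1 * z 2 * h3 3 1 1 2 + u 3 * v 1 * w 1 * z 3 * h3 3 1 1 3 + u 3 * v 1 * w 2 * z 0 * h3 3 1 2 0 + u 3 * v 1 * w 2 * z 1 * h3 3 1 2 1 + u 3 * v 1 * w 2 * z 2 * h3 3 1 2 2 + u 3 * v 1 * w 2 * z 3 * h3 3 1 2 3 + u 3 * v 1 * w 3 * z 0 * h3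 3 1 3 0 + u 3 * v 1 * w 3 * z 1 * h3 3 1 3 1 + u 3 * v 1 * w 3 * z 2 * h3 3 1 3 2 + u 3 * v 1 * w 3 * z 3 * h3 3 1 3 3 + u 3 * v 2 * w 0 * z 0 * h3 3 2 0 0 + u 3 * v 2 * w 0 * z 1 * h3 3 2 0 1 + u 3 * v 2 * w 0 * z 2 * h3 3 2 0 2 + u 3 * v 2 * w 0 * z 3 * h3 3 2 0 3 + u 3 * v 2 * w 1 * z 0 * h3 3 2 1 0 + u 3 * v 2 * w 1 * z 1 * h3 3 2 1 1 + u 3 * v 2 * w 1 * z 2 * h3 3 2 1 2 + u 3 * v 2 * w 1 * z 3 * h3 3 2 1 3 + u 3 * v 2 * w 2 * z 0 * h3 3 2 2 0 + u 3 * v 2 * w 2 * z 1 * h3 3 2 2 1 + u 3 * v 2 * w 2 * z 2 * h3 3 2 2 2 + u 3 * v 2 * w 2 * z 3 * h3 3 2 2 3 + u 3 * v 2 * w 3 * z 0 * h3 3 2 3 0 + u 3 * v 2 * w 3 * z 1 * h3 3 2 3 1 + u 3 * v 2 * w 3 * z 2 * h3 3 2 3 2 + u 3 * v 2 * w 3 *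 z 3 * h3 3 2 3 3 + u 3 * v 3 * w 0 * z 0 * h3 3 3 0 0 + u 3 * v 3 * w 0 * z 1 * h3 3 3 0 1 + u 3 * v 3 * w 0 * z 2 * h3 3 3 0 2 + u 3 * v 3 * w 0 * z 3 * h3 3 3 0 3 + u 3 * v 3 * w 1 * z 0 * h3 3 3 1 0 + u 3 * v 3 * w 1 * z 1 * h3 3 3 1 1 + u 3 * v 3 * w 1 * z 2 * h3 3 3 1 2 + u 3 * v 3 * w 1 * z 3 * h3 3 3 1 3 + u 3 * v 3 * w 2 * z 0 * h3 3 3 2 0 + u 3 * v 3 * w 2 * z 1 * h3 3 3 2 1 + u 3 * v 3 * w 2 * z 2 * h3 3 3 2 2 + u 3 * v 3 * w 2 * z 3 * h3 3 3 2 3 + u 3 * v 3 * w 3 * z 0 * h3 3 3 3 0 + u 3 * v 3 * w 3 * z 1 * h3 3 3 3 1 + u 3 * v 3 * w 3 * z 2 * h3 3 3 3 2 + u 3 * v 3 * w 3 * z 3 * h3 3 3 3 3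

lemma qcx1 (R : Fin 4 → Fin 4 → Fin 4 → Fin 4 → ℝ) (x : Fin 4 → ℝ)
    (hRx : ∀ a b c, ∑ d : Fin 4, R a b c d * x d = 0) (w v u : Fin 4 → ℝ) :
    qc R x w v u = 0 := by
  simp only [qc, hRx, zero_mul, Finset.sum_const_zero]

lemma hx3_of (R : Fin 4 → Fin 4 → Fin 4 → Fin 4 → ℝ) (x : Fin 4 → ℝ)
    (h2 : ∀ a b c d, R a b c d = -R a b d c)
    (hRx : ∀ a b c, ∑ d : Fin 4, R a b c d * x d = 0) :
    ∀ a b d, ∑ c : Fin 4, R a b c d * x c = 0 := by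
  have hR := hRx
  simp only [Fin.sum_univ_four] at hR ⊢
  intro a b d
  linear_combination x 0 * h2 a b 0 d + x 1 * h2 a b 1 d + x 2 * h2 a b 2 d + x 3 * h2 a b 3 d - hR a b d

lemma hx2_of (R : Fin 4 → Fin 4 → Fin 4 → Fin 4 → ℝ) (x : Fin 4 → ℝ)
    (h3 : ∀ a b c d, R a b c d = R c d a b)
    (hRx : ∀ a b c, ∑ d : Fin 4, R a b c d * x d = 0) :
    ∀ a c d, ∑ b : Fin 4, R a b c d * x b = 0 := by
  have hR := hRx
  simp only [Fin.sum_univ_four] at hR ⊢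
  intro a c d
  linear_combination x 0 * h3 a 0 c d + x 1 * h3 a 1 c d + x 2 * h3 a 2 c d + x 3 * h3 a 3 c d + hR c d a

lemma xlift2 (R : Fin 4 → Fin 4 → Fin 4 → Fin 4 → ℝ) (x : Fin 4 → ℝ)
    (h2 : ∀ a b c d, R a b c d = -R a b d c)
    (hRx : ∀ a b c, ∑ d : Fin 4, R a b c d * x d = 0)
    (z : Fin 4 → ℝ) (a b : Fin 4) :
    (∑ c : Fin 4, (∑ d : Fin 4, R a b c d * z d) * x c) = 0 := by
  have h3x := hx3_of R x h2 hRx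
  simp only [Fin.sum_univ_four] at h3x ⊢
  linear_combination z 0 * h3x a b 0 + z 1 * h3x a b 1 + z 2 * h3x a b 2 + z 3 * h3x a b 3

lemma xlift3 (R : Fin 4 → Fin 4 → Fin 4 → Fin 4 → ℝ) (x : Fin 4 → ℝ)
    (h3 : ∀ a b c d, R a b c d = R c d a b)
    (hRx : ∀ a b c, ∑ d : Fin 4, R a b c d * x d = 0)
    (z w : Fin 4 → ℝ) (a : Fin 4) :
    (∑ b : Fin 4, (∑ c : Fin 4, (∑ d : Fin 4, R a b c d * z d) * w c) * x b) = 0 := by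
  have h2x := hx2_of R x h3 hRx
  simp only [Fin.sum_univ_four] at h2x ⊢
  linear_combination w 0 * z 0 * h2x a 0 0 + w 0 * z 1 * h2x a 0 1 + w 0 * z 2 * h2x a 0 2 + w 0 * z 3 * h2x a 0 3 + w 1 * z 0 * h2x a 1 0 + w 1 * z 1 * h2x a 1 1 + w 1 * z 2 * h2x a 1 2 + w 1 * z 3 * h2x a 1 3 + w 2 * z 0 * h2x a 2 0 + w 2 * z 1 * h2x a 2 1 + w 2 * z 2 * h2x a 2 2 + w 2 * z 3 * h2x a 2 3 + w 3 * z 0 * h2x a 3 0 + w 3 * z 1 * h2x a 3 1 + w 3 * z 2 * h2x a 3 2 + w 3 * z 3 * h2x a 3 3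

lemma completeness (l n x y : Fin 4 → ℝ)
    (hll : minkowski l l = 0) (hnn : minkowski n n = 0)
    (hxx : minkowski x x = 1) (hyy : minkowski y y = 1)
    (hln : minkowski l n = 1) (hlx : minkowski l x = 0) (hly : minkowski l y = 0)
    (hnx : minkowski n x = 0) (hny : minkowski n y = 0) (hxy : minkowski x y = 0) :
    ∀ a b, l a * n b + n a * l b + x a * x b + y a * y b = eta a b := by
  simp only [minkowski] at hll hnn hxx hyy hln hlx hly hnx hny hxy
  set E : Matrix (Fin 4) (Fin 4) ℝ := Matrix.of fun a i => ![l, n, x, y] i a with hE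
  set H : Matrix (Fin 4) (Fin 4) ℝ := Matrix.of fun a b => eta a b with hH
  set B : Matrix (Fin 4) (Fin 4) ℝ := !![0,1,0,0; 1,0,0,0; 0,0,1,0; 0,0,0,1] with hB
  have hBB : B * B = 1 := by
    ext i j
    fin_cases i <;> fin_cases j <;>
      simp [hB, Matrix.mul_apply, Fin.sum_univ_four, Matrix.one_apply, Matrix.vecHead,
        Matrix.vecTail]
  have hHH : H * H = 1 := by
    ext i j
    fin_cases i <;> fin_cases j <;>
      simp [hH, Matrix.mul_apply, Fin.sum_univ_four, Matrix.one_apply, eta]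
  have hG : Eᵀ * H * E = B := by
    ext i j
    fin_cases i <;> fin_cases j <;>
      (simp [hE, hH, hB, Matrix.mul_apply, Matrix.transpose_apply, Fin.sum_univ_four, eta,
        Matrix.vecHead, Matrix.vecTail];
       linarith [hll, hnn, hxx, hyy, hln, hlx, hly, hnx, hny, hxy])
  have hleft : (B * (Eᵀ * H)) * E = 1 := by
    calc (B * (Eᵀ * H)) * E = B * (Eᵀ * H * E) := by rw [Matrix.mul_assoc]
    _ = B * B := by rw [hG]
    _ = 1 := hBB
  have hright : E * (B * (Eᵀ * H)) = 1 := mul_eq_one_comm.mp hleft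
  have k1 : E * B * Eᵀ * H = 1 := by
    simp only [Matrix.mul_assoc]
    exact hright
  have key : E * B * Eᵀ = H := by
    have hmm : E * B * Eᵀ * (H * H) = E * B * Eᵀ := by rw [hHH, Matrix.mul_one]
    calc E * B * Eᵀ = E * B * Eᵀ * (H * H) := hmm.symm
    _ = (E * B * Eᵀ * H) * H := by rw [← Matrix.mul_assoc]
    _ = 1 * H := by rw [k1]
    _ = H := Matrix.one_mul H
  intro a b
  have hk := congrFun (congrFun key a) b
  simp [hE, hH, hB, Matrix.mul_apply, Matrix.transpose_apply, Fin.sum_univ_four,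
    Matrix.vecHead, Matrix.vecTail, eta] at hk
  simp only [eta]
  linarith [hk]

lemma dot (u v : Fin 4 → ℝ) : (∑ e : Fin 4, lower u e * v e) = minkowski u v := by
  simp [lower, minkowski, Fin.sum_univ_four, eta]

lemma delta (l n x y : Fin 4 → ℝ)
    (comp : ∀ a b, l a * n b + n a * l b + x a * x b + y a * y b = eta a b) :
    ∀ e t, l e * lower n t + n e * lower l t + x e * lower x t + y e * lower y t
      = if e = t then 1 else 0 := by
  intro e t
  have h := comp e t
  fin_cases e <;> fin_cases t <;>
    simp [lower, Fin.sum_univ_four, eta] at h ⊢ <;> linarith [h]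

lemma expand (l n x y : Fin 4 → ℝ)
    (comp : ∀ a b, l a * n b + n a * l b + x a * x b + y a * y b = eta a b)
    (f : Fin 4 → ℝ) (t : Fin 4) :
    f t = (∑ e : Fin 4, f e * l e) * lower n t + (∑ e : Fin 4, f e * n e) * lower l t
      + (∑ e : Fin 4, f e * x e) * lower x t + (∑ e : Fin 4, f e * y e) * lower y t := by
  have base : f t = ∑ e : Fin 4, f e * (if e = t then 1 else 0) := by
    simp [mul_ite, mul_one, mul_zero, Finset.sum_ite_eq']
  rw [base]
  have step : ∀ e : Fin 4, f e * (if e = t then 1 else 0)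
      = f e * (l e * lower n t + n e * lower l t + x e * lower x t + y e * lower y t) := by
    intro e; rw [delta l n x y comp e t]
  rw [Finset.sum_congr rfl fun e _ => step e]
  simp only [Fin.sum_univ_four]
  ring

lemma ric_aux (R : Fin 4 → Fin 4 → Fin 4 → Fin 4 → ℝ) (l n x y : Fin 4 → ℝ) (μ : ℝ)
    (comp : ∀ a b, l a * n b + n a * l b + x a * x b + y a * y b = eta a b)
    (hRicci : ∀ b d, ∑ a : Fin 4, ∑ c : Fin 4, eta a c * R a b c d = μ * lower l b * lower l d)
    (v w : Fin 4 → ℝ) :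
    qc R w n v l + qc R w l v n + qc R w x v x + qc R w y v y
      = μ * (∑ e : Fin 4, lower l e * v e) * (∑ e : Fin 4, lower l e * w e) := by
  have hR := hRicci
  simp only [Fin.sum_univ_four] at hR
  simp only [qc, Fin.sum_univ_four]
  linear_combination v 0 * w 0 * hR 0 0 + v 0 * w 1 * hR 0 1 + v 0 * w 2 * hR 0 2 + v 0 * w 3 * hR 0 3 + v 1 * w 0 * hR 1 0 + v 1 * w 1 * hR 1 1 + v 1 * w 2 * hR 1 2 + v 1 * w 3 * hR 1 3 + v 2 * w 0 * hR 2 0 + v 2 * w 1 * hR 2 1 + v 2 * w 2 * hR 2 2 + v 2 * w 3 * hR 2 3 + v 3 * w 0 * hR 3 0 + v 3 * w 1 * hR 3 1 + v 3 * w 2 * hR 3 2 + v 3 * w 3 * hR 3 3 + (R 0 0 0 0 * v 0 * w 0 + R 0 0 0 1 * v 0 * w 1 + R 0 0 0 2 * v 0 * w 2 + R 0 0 0 3 * v 0 * w 3 + R 0 1 0 0 * v 1 * w 0 + R 0 1 0 1 * v 1 * w 1 + R 0 1 0 2 * v 1 * w 2 + R 0 1 0 3 * v 1 * w 3 + R 0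 2 0 0 * v 2 * w 0 + R 0 2 0 1 * v 2 * w 1 + R 0 2 0 2 * v 2 * w 2 + R 0 2 0 3 * v 2 * w 3 + R 0 3 0 0 * v 3 * w 0 + R 0 3 0 1 * v 3 * w 1 + R 0 3 0 2 * v 3 * w 2 + R 0 3 0 3 * v 3 * w 3) * comp 0 0 + (R 0 0 1 0 * v 0 * w 0 + R 0 0 1 1 * v 0 * w 1 + R 0 0 1 2 * v 0 * w 2 + R 0 0 1 3 * v 0 * w 3 + R 0 1 1 0 * v 1 * w 0 + R 0 1 1 1 * v 1 * w 1 + R 0 1 1 2 * v 1 * w 2 + R 0 1 1 3 * v 1 * w 3 + R 0 2 1 0 * v 2 * w 0 + R 0 2 1 1 * v 2 * w 1 + R 0 2 1 2 * v 2 * w 2 + R 0 2 1 3 * v 2 * w 3 + R 0 3 1 0 * v 3 * w 0 + R 0 3 1 1 * v 3 * w 1 + R 0 3 1 2 * v 3 * w 2 + R 0 3 1 3 * v 3 * w 3) * comp 0 1 + (R 0 0 2 0 * v 0 * w 0 + R 0 0 2 1 * v 0 * w 1 + R 0 0 2 2 * v 0 * w 2 + R 0 0 2 3 * v 0 * w 3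 + R 0 1 2 0 * v 1 * w 0 + R 0 1 2 1 * v 1 * w 1 + R 0 1 2 2 * v 1 * w 2 + R 0 1 2 3 * v 1 * w 3 + R 0 2 2 0 * v 2 * w 0 + R 0 2 2 1 * v 2 * w 1 + R 0 2 2 2 * v 2 * w 2 + R 0 2 2 3 * v 2 * w 3 + R 0 3 2 0 * v 3 * w 0 + R 0 3 2 1 * v 3 * w 1 + R 0 3 2 2 * v 3 * w 2 + R 0 3 2 3 * v 3 * w 3) * comp 0 2 + (R 0 0 3 0 * v 0 * w 0 + R 0 0 3 1 * v 0 * w 1 + R 0 0 3 2 * v 0 * w 2 + R 0 0 3 3 * v 0 * w 3 + R 0 1 3 0 * v 1 * w 0 + R 0 1 3 1 * v 1 * w 1 + R 0 1 3 2 * v 1 * w 2 + R 0 1 3 3 * v 1 * w 3 + R 0 2 3 0 * v 2 * w 0 + R 0 2 3 1 * v 2 * w 1 + R 0 2 3 2 * v 2 * w 2 + R 0 2 3 3 * v 2 * w 3 + R 0 3 3 0 * v 3 * w 0 + R 0 3 3 1 * v 3 * w 1 + R 0 3 3 2 * v 3 * w 2 + R 0 3 3 3 * v 3 * w 3) * comp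 0 3 + (R 1 0 0 0 * v 0 * w 0 + R 1 0 0 1 * v 0 * w 1 + R 1 0 0 2 * v 0 * w 2 + R 1 0 0 3 * v 0 * w 3 + R 1 1 0 0 * v 1 * w 0 + R 1 1 0 1 * v 1 * w 1 + R 1 1 0 2 * v 1 * w 2 + R 1 1 0 3 * v 1 * w 3 + R 1 2 0 0 * v 2 * w 0 + R 1 2 0 1 * v 2 * w 1 + R 1 2 0 2 * v 2 * w 2 + R 1 2 0 3 * v 2 * w 3 + R 1 3 0 0 * v 3 * w 0 + R 1 3 0 1 * v 3 * w 1 + R 1 3 0 2 * v 3 * w 2 + R 1 3 0 3 * v 3 * w 3) * comp 1 0 + (R 1 0 1 0 * v 0 * w 0 + R 1 0 1 1 * v 0 * w 1 + R 1 0 1 2 * v 0 * w 2 + R 1 0 1 3 * v 0 * w 3 + R 1 1 1 0 * v 1 * w 0 + R 1 1 1 1 * v 1 * w 1 + R 1 1 1 2 * v 1 * w 2 + R 1 1 1 3 * v 1 * w 3 + R 1 2 1 0 * v 2 * w 0 + R 1 2 1 1 * v 2 * w 1 + R 1 2 1 2 * v 2 * w 2 + R 1 2 1 3 * v 2 * w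 3 + R 1 3 1 0 * v 3 * w 0 + R 1 3 1 1 * v 3 * w 1 + R 1 3 1 2 * v 3 * w 2 + R 1 3 1 3 * v 3 * w 3) * comp 1 1 + (R 1 0 2 0 * v 0 * w 0 + R 1 0 2 1 * v 0 * w 1 + R 1 0 2 2 * v 0 * w 2 + R 1 0 2 3 * v 0 * w 3 + R 1 1 2 0 * v 1 * w 0 + R 1 1 2 1 * v 1 * w 1 + R 1 1 2 2 * v 1 * w 2 + R 1 1 2 3 * v 1 * w 3 + R 1 2 2 0 * v 2 * w 0 + R 1 2 2 1 * v 2 * w 1 + R 1 2 2 2 * v 2 * w 2 + R 1 2 2 3 * v 2 * w 3 + R 1 3 2 0 * v 3 * w 0 + R 1 3 2 1 * v 3 * w 1 + R 1 3 2 2 * v 3 * w 2 + R 1 3 2 3 * v 3 * w 3) * comp 1 2 + (R 1 0 3 0 * v 0 * w 0 + R 1 0 3 1 * v 0 * w 1 + R 1 0 3 2 * v 0 * w 2 + R 1 0 3 3 * v 0 * w 3 + R 1 1 3 0 * v 1 * w 0 + R 1 1 3 1 * v 1 * w 1 + R 1 1 3 2 * v 1 * w 2 + R 1 1 3 3 *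 v 1 * w 3 + R 1 2 3 0 * v 2 * w 0 + R 1 2 3 1 * v 2 * w 1 + R 1 2 3 2 * v 2 * w 2 + R 1 2 3 3 * v 2 * w 3 + R 1 3 3 0 * v 3 * w 0 + R 1 3 3 1 * v 3 * w 1 + R 1 3 3 2 * v 3 * w 2 + R 1 3 3 3 * v 3 * w 3) * comp 1 3 + (R 2 0 0 0 * v 0 * w 0 + R 2 0 0 1 * v 0 * w 1 + R 2 0 0 2 * v 0 * w 2 + R 2 0 0 3 * v 0 * w 3 + R 2 1 0 0 * v 1 * w 0 + R 2 1 0 1 * v 1 * w 1 + R 2 1 0 2 * v 1 * w 2 + R 2 1 0 3 * v 1 * w 3 + R 2 2 0 0 * v 2 * w 0 + R 2 2 0 1 * v 2 * w 1 + R 2 2 0 2 * v 2 * w 2 + R 2 2 0 3 * v 2 * w 3 + R 2 3 0 0 * v 3 * w 0 + R 2 3 0 1 * v 3 * w 1 + R 2 3 0 2 * v 3 * w 2 + R 2 3 0 3 * v 3 * w 3) * comp 2 0 + (R 2 0 1 0 * v 0 * w 0 + R 2 0 1 1 * v 0 * w 1 + R 2 0 1 2 * v 0 * w 2 + R 2 0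 1 3 * v 0 * w 3 + R 2 1 1 0 * v 1 * w 0 + R 2 1 1 1 * v 1 * w 1 + R 2 1 1 2 * v 1 * w 2 + R 2 1 1 3 * v 1 * w 3 + R 2 2 1 0 * v 2 * w 0 + R 2 2 1 1 * v 2 * w 1 + R 2 2 1 2 * v 2 * w 2 + R 2 2 1 3 * v 2 * w 3 + R 2 3 1 0 * v 3 * w 0 + R 2 3 1 1 * v 3 * w 1 + R 2 3 1 2 * v 3 * w 2 + R 2 3 1 3 * v 3 * w 3) * comp 2 1 + (R 2 0 2 0 * v 0 * w 0 + R 2 0 2 1 * v 0 * w 1 + R 2 0 2 2 * v 0 * w 2 + R 2 0 2 3 * v 0 * w 3 + R 2 1 2 0 * v 1 * w 0 + R 2 1 2 1 * v 1 * w 1 + R 2 1 2 2 * v 1 * w 2 + R 2 1 2 3 * v 1 * w 3 + R 2 2 2 0 * v 2 * w 0 + R 2 2 2 1 * v 2 * w 1 + R 2 2 2 2 * v 2 * w 2 + R 2 2 2 3 * v 2 * w 3 + R 2 3 2 0 * v 3 * w 0 + R 2 3 2 1 * v 3 * w 1 + R 2 3 2 2 * v 3 * w 2 + R 2 3 2 3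 * v 3 * w 3) * comp 2 2 + (R 2 0 3 0 * v 0 * w 0 + R 2 0 3 1 * v 0 * w 1 + R 2 0 3 2 * v 0 * w 2 + R 2 0 3 3 * v 0 * w 3 + R 2 1 3 0 * v 1 * w 0 + R 2 1 3 1 * v 1 * w 1 + R 2 1 3 2 * v 1 * w 2 + R 2 1 3 3 * v 1 * w 3 + R 2 2 3 0 * v 2 * w 0 + R 2 2 3 1 * v 2 * w 1 + R 2 2 3 2 * v 2 * w 2 + R 2 2 3 3 * v 2 * w 3 + R 2 3 3 0 * v 3 * w 0 + R 2 3 3 1 * v 3 * w 1 + R 2 3 3 2 * v 3 * w 2 + R 2 3 3 3 * v 3 * w 3) * comp 2 3 + (R 3 0 0 0 * v 0 * w 0 + R 3 0 0 1 * v 0 * w 1 + R 3 0 0 2 * v 0 * w 2 + R 3 0 0 3 * v 0 * w 3 + R 3 1 0 0 * v 1 * w 0 + R 3 1 0 1 * v 1 * w 1 + R 3 1 0 2 * v 1 * w 2 + R 3 1 0 3 * v 1 * w 3 + R 3 2 0 0 * v 2 * w 0 + R 3 2 0 1 * v 2 * w 1 + R 3 2 0 2 * v 2 * w 2 + R 3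 2 0 3 * v 2 * w 3 + R 3 3 0 0 * v 3 * w 0 + R 3 3 0 1 * v 3 * w 1 + R 3 3 0 2 * v 3 * w 2 + R 3 3 0 3 * v 3 * w 3) * comp 3 0 + (R 3 0 1 0 * v 0 * w 0 + R 3 0 1 1 * v 0 * w 1 + R 3 0 1 2 * v 0 * w 2 + R 3 0 1 3 * v 0 * w 3 + R 3 1 1 0 * v 1 * w 0 + R 3 1 1 1 * v 1 * w 1 + R 3 1 1 2 * v 1 * w 2 + R 3 1 1 3 * v 1 * w 3 + R 3 2 1 0 * v 2 * w 0 + R 3 2 1 1 * v 2 * w 1 + R 3 2 1 2 * v 2 * w 2 + R 3 2 1 3 * v 2 * w 3 + R 3 3 1 0 * v 3 * w 0 + R 3 3 1 1 * v 3 * w 1 + R 3 3 1 2 * v 3 * w 2 + R 3 3 1 3 * v 3 * w 3) * comp 3 1 + (R 3 0 2 0 * v 0 * w 0 + R 3 0 2 1 * v 0 * w 1 + R 3 0 2 2 * v 0 * w 2 + R 3 0 2 3 * v 0 * w 3 + R 3 1 2 0 * v 1 * w 0 + R 3 1 2 1 * v 1 * w 1 + R 3 1 2 2 * v 1 * w 2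 + R 3 1 2 3 * v 1 * w 3 + R 3 2 2 0 * v 2 * w 0 + R 3 2 2 1 * v 2 * w 1 + R 3 2 2 2 * v 2 * w 2 + R 3 2 2 3 * v 2 * w 3 + R 3 3 2 0 * v 3 * w 0 + R 3 3 2 1 * v 3 * w 1 + R 3 3 2 2 * v 3 * w 2 + R 3 3 2 3 * v 3 * w 3) * comp 3 2 + (R 3 0 3 0 * v 0 * w 0 + R 3 0 3 1 * v 0 * w 1 + R 3 0 3 2 * v 0 * w 2 + R 3 0 3 3 * v 0 * w 3 + R 3 1 3 0 * v 1 * w 0 + R 3 1 3 1 * v 1 * w 1 + R 3 1 3 2 * v 1 * w 2 + R 3 1 3 3 * v 1 * w 3 + R 3 2 3 0 * v 2 * w 0 + R 3 2 3 1 * v 2 * w 1 + R 3 2 3 2 * v 2 * w 2 + R 3 2 3 3 * v 2 * w 3 + R 3 3 3 0 * v 3 * w 0 + R 3 3 3 1 * v 3 * w 1 + R 3 3 3 2 * v 3 * w 2 + R 3 3 3 3 * v 3 * w 3) * comp 3 3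

/-- Equation (17): for a real null tetrad `(l,n,x,y)`, if an algebraic curvature
tensor satisfies `R_{abcd}x^d = 0` and has Ricci tensor `μ λ_b λ_d` with `μ ≠ 0`,
then `R_{abcd} = μ (λ∧υ)_{ab} (λ∧υ)_{cd} = 4μ l_{[a}y_{b]} l_{[c}y_{d]}`. -/
theorem null_EM_curvature_with_constant_spacelike_vector
    (l n x y : Fin 4 → ℝ)
    (hll : minkowski l l = 0) (hnn : minkowski n n = 0)
    (hxx : minkowski x x = 1) (hyy : minkowski y y = 1)
    (hln : minkowski l n = 1) (hlx : minkowski l x = 0) (hly : minkowski l y = 0)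
    (hnx : minkowski n x = 0) (hny : minkowski n y = 0) (hxy : minkowski x y = 0)
    (R : Fin 4 → Fin 4 → Fin 4 → Fin 4 → ℝ)
    (h1 : ∀ a b c d, R a b c d = -R b a c d)
    (h2 : ∀ a b c d, R a b c d = -R a b d c)
    (h3 : ∀ a b c d, R a b c d = R c d a b)
    (h4 : ∀ a b c d, R a b c d + R a c d b + R a d b c = 0)
    (hRx : ∀ a b c, ∑ d : Fin 4, R a b c d * x d = 0)
    (μ : ℝ) (hμ : μ ≠ 0)
    (hRicci : ∀ b d, ∑ a : Fin 4, ∑ c : Fin 4, eta a c * R a b c d =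
      μ * lower l b * lower l d) :
    ∀ a b c d, R a b c d =
      μ * (lower l a * lower y b - lower l b * lower y a)
        * (lower l c * lower y d - lower l d * lower y c) := by
  
  intro a b c d
  have comp := completeness l n x y hll hnn hxx hyy hln hlx hly hnx hny hxy
  have dll : (∑ e : Fin 4, lower l e * l e) = 0 := by rw [dot]; exact hll
  have dln : (∑ e : Fin 4, lower l e * n e) = 1 := by rw [dot]; exact hln
  have dly : (∑ e : Fin 4, lower l e * y e) = 0 := by rw [dot]; exact hly
  have ric := ric_aux R l n x y μ comp hRicci
  have qx1' := qcx1 R x hRx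
  have sCD := swapCD R h2
  have sAB := swapAB R h1
  have sPR := swapPR R h3
  have qx2 : ∀ z v u, qc R z x v u = 0 := fun z v u => by linarith [sCD z x v u, qx1' z v u]
  have qx3 : ∀ z w u, qc R z w x u = 0 := fun z w u => by rw [sPR z w x u]; exact qx1' u z w
  have qx4 : ∀ z w v, qc R z w v x = 0 := fun z w v => by rw [sPR z w v x]; exact qx2 v z w
  have vD : qc R y l y l = 0 := by
    have r := ric l l; rw [dll] at r
    linarith [sAB l n l l, sCD l l l n, qx2 l l x, sCD l y l y, sAB y l l y, r]
  have vE : qc R y n y l = 0 := by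
    have r := ric y y; rw [dly] at r
    linarith [sPR y l y n, qx2 y y x, sCD y y y y, r]
  have vA : qc R n l n l = 0 := by
    have r := ric l n; rw [dll, dln] at r
    linarith [sAB n n l l, sAB n l l n, qx2 n l x, sCD n y l y, sAB y n l y, vE, r]
  have vB : qc R y l n l = 0 := by
    have r := ric l y; rw [dll, dly] at r
    linarith [sAB y n l l, sAB y l l n, qx2 y l x, sCD y y l y, r]
  have vC : qc R y n n l = 0 := by
    have r := ric n y; rw [dln, dly] at r
    linarith [sAB y l n n, qx2 y n x, sCD y y n y, r]
  have vF : qc R y n y n = μ := by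
    have r := ric n n; rw [dln] at r
    linarith [sCD n n n l, sAB n l n n, qx2 n n x, sCD n y n y, sAB y n n y, r]
  have r1 : ∀ v u, qc R l n v u = -qc R n l v u := fun v u => sCD l n v u
  have r2 : ∀ v u, qc R l y v u = -qc R y l v u := fun v u => sCD l y v u
  have r3 : ∀ v u, qc R n y v u = -qc R y n v u := fun v u => sCD n y v u
  have r4 : ∀ v u, qc R l l v u = 0 := fun v u => by linarith [sCD l l v u]
  have r5 : ∀ v u, qc R n n v u = 0 := fun v u => by linarith [sCD n n v u]
  have r6 : ∀ v u, qc R y y v u = 0 := fun v u => by linarith [sCD y y v u]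
  have r7 : ∀ z w, qc R z w l n = -qc R z w n l := fun z w => sAB z w l n
  have r8 : ∀ z w, qc R z w l y = -qc R z w y l := fun z w => sAB z w l y
  have r9 : ∀ z w, qc R z w n y = -qc R z w y n := fun z w => sAB z w n y
  have r10 : ∀ z w, qc R z w l l = 0 := fun z w => by linarith [sAB z w l l]
  have r11 : ∀ z w, qc R z w n n = 0 := fun z w => by linarith [sAB z w n n]
  have r12 : ∀ z w, qc R z w y y = 0 := fun z w => by linarith [sAB z w y y]
  have rs1 : qc R n l y l = qc R y l n l := sPR n l y l
  have rs2 : qc R n l y n = qc R y n n l := sPR n l y n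
  have rs3 : qc R y l y n = qc R y n y l := sPR y l y n
  have hx2l := xlift2 R x h2 hRx
  have hx3l := xlift3 R x h3 hRx
  have E1 : R a b c d = (∑ e : Fin 4, R a b c e * l e) * lower n d + (∑ e : Fin 4, R a b c e * n e) * lower l d
      + (∑ e : Fin 4, R a b c e * x e) * lower x d + (∑ e : Fin 4, R a b c e * y e) * lower y d :=
    expand l n x y comp (fun t => R a b c t) d
  rw [E1, hRx a b c]
  have E2 : ∀ z : Fin 4 → ℝ, (∑ e : Fin 4, R a b c e * z e)
      = (∑ t : Fin 4, (∑ e : Fin 4, R a b t e * z e) * l t) * lower n c + (∑ t : Fin 4, (∑ e : Fin 4, R a b t e * z e) * n t) * lower l c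
      + (∑ t : Fin 4, (∑ e : Fin 4, R a b t e * z e) * x t) * lower x c + (∑ t : Fin 4, (∑ e : Fin 4, R a b t e * z e) * y t) * lower y c :=
    fun z => expand l n x y comp (fun t => ∑ e : Fin 4, R a b t e * z e) c
  rw [E2 l, E2 n, E2 y, hx2l l a b, hx2l n a b, hx2l y a b]
  have E3 : ∀ z w : Fin 4 → ℝ, (∑ t : Fin 4, (∑ e : Fin 4, R a b t e * z e) * w t)
      = (∑ s : Fin 4, (∑ t : Fin 4, (∑ e : Fin 4, R a s t e * z e) * w t) * l s) * lower n b + (∑ s : Fin 4, (∑ t : Fin 4, (∑ e : Fin 4, R a s t e * z e) * w t) * n s) * lower l b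
      + (∑ s : Fin 4, (∑ t : Fin 4, (∑ e : Fin 4, R a s t e * z e) * w t) * x s) * lower x b + (∑ s : Fin 4, (∑ t : Fin 4, (∑ e : Fin 4, R a s t e * z e) * w t) * y s) * lower y b :=
    fun z w => expand l n x y comp (fun s => ∑ t : Fin 4, (∑ e : Fin 4, R a s t e * z e) * w t) b
  rw [E3 l l, E3 l n, E3 l y, E3 n l, E3 n n, E3 n y, E3 y l, E3 y n, E3 y y]
  rw [hx3l l l a, hx3l l n a, hx3l l y a, hx3l n l a, hx3l n n a, hx3l n y a, hx3l y l a, hx3l y n a, hx3l y y a]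
  have E4 : ∀ z w v : Fin 4 → ℝ, (∑ s : Fin 4, (∑ t : Fin 4, (∑ e : Fin 4, R a s t e * z e) * w t) * v s)
      = qc R z w v l * lower n a + qc R z w v n * lower l a
      + qc R z w v x * lower x a + qc R z w v y * lower y a :=
    fun z w v => expand l n x y comp
      (fun p => ∑ s : Fin 4, (∑ t : Fin 4, (∑ e : Fin 4, R p s t e * z e) * w t) * v s) a
  rw [E4 l l l, E4 l l n, E4 l l y, E4 l n l, E4 l n n, E4 l n y, E4 l y l, E4 l y n, E4 l y y, E4 n l l, E4 n l n, E4 n l y, E4 n n l, E4 n n n, E4 n n y, E4 n y l, E4 n y n, E4 n y y, E4 y l l, E4 y l n, E4 y l y, E4 y n l, E4 y n n, E4 y n y, E4 y y l, E4 y y n, E4 y y y]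
  simp only [qx4, r1, r2, r3, r4, r5, r6, r7, r8, r9, r10, r11, r12, rs1, rs2, rs3,
    vA, vB, vC, vD, vE, vF, neg_neg, neg_zero, zero_mul, mul_zero, add_zero, zero_add]
  ring
end
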